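/- arXiv:1003.3121 — 5 statements merged into one kernel-verified Lean document; each statement's English description precedes it below -/
import Mathlib

section
/- Suppose (A1) holds with d = 1. If the process Y_n = X_n − G_n is transient, i.e. |X_n − G_n| → ∞ a.s., then X_n and G_n are also transient: |X_n| → ∞ and |G_n| → ∞ almost surely as n → ∞. -/
/-! In one dimension `Y_{n+1} = n/(n+1) · (Y_n + Δ_n)`, so once `|Y_n| > B` the bounded increment
cannot flip the sign of `Y`; hence `Y_n → +∞` or `Y_n → -∞`, and by the symmetry `X ↦ -X` we may
assume `+∞`. Then `G_{n+1} - G_n = Y_{n+1} / n ≥ 1/n` eventually, so `G_n → ∞` because the harmonic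
series diverges, and `X_n = Y_n + G_n → ∞` as well. -/

open MeasureTheory Filter Finset

noncomputable def runningMean (x : ℕ → ℝ) (n : ℕ) : ℝ := (n : ℝ)⁻¹ * ∑ i ∈ Icc 1 n, x i

lemma runningMean_neg (x : ℕ → ℝ) (n : ℕ) : runningMean (-x) n = -runningMean x n := by
  simp [runningMean]

lemma sub_runningMean_succ (x : ℕ → ℝ) (n : ℕ) :
    x (n + 1) - runningMean x (n + 1) =
      n / (n + 1) * (x n - runningMean x n + (x (n + 1) - x n)) := by
  rcases Nat.eq_zero_or_pos n with rfl | hn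
  · simp [runningMean]
  have hn' : (n : ℝ) ≠ 0 := by positivity
  simp only [runningMean, sum_Icc_succ_top (Nat.succ_le_succ hn.le)]
  push_cast
  field_simp
  ring

lemma runningMean_succ_sub {n : ℕ} (hn : n ≠ 0) (x : ℕ → ℝ) :
    runningMean x (n + 1) - runningMean x n = (x (n + 1) - runningMean x (n + 1)) / n := by
  have hn' : (n : ℝ) ≠ 0 := by exact_mod_cast hn
  simp only [runningMean, sum_Icc_succ_top (by omega : 1 ≤ n + 1)]
  push_cast
  field_simp
  ring

lemma tendsto_atTop_of_sum_le_sub {a b : ℕ → ℝ}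
    (hb : Tendsto (fun m => ∑ n ∈ range m, b n) atTop atTop)
    (hab : ∀ᶠ n in atTop, b n ≤ a (n + 1) - a n) : Tendsto a atTop atTop := by
  obtain ⟨N, hN⟩ := eventually_atTop.1 hab
  set S := fun m => ∑ n ∈ range m, b n
  have hlower : ∀ m, N ≤ m → a N + (S m - S N) ≤ a m := by
    intro m hm
    induction m, hm using Nat.le_induction with
    | base => simp
    | succ m hm ih => simp only [S, sum_range_succ] at ih ⊢; linarith [hN m hm]
  refine tendsto_atTop_mono' atTop ?_ (tendsto_atTop_add_const_left _ (a N - S N) hb)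
  filter_upwards [eventually_ge_atTop N] with m hm
  linarith [hlower m hm]

lemma tendsto_atTop_or_atBot_of_tendsto_abs {y : ℕ → ℝ}
    (hy : Tendsto (fun n => |y n|) atTop atTop)
    (hpos : ∀ᶠ n in atTop, 0 < y n → 0 < y (n + 1)) :
    Tendsto y atTop atTop ∨ Tendsto y atTop atBot := by
  obtain ⟨N, hN⟩ := eventually_atTop.1 hpos
  by_cases h : ∃ n, N ≤ n ∧ 0 < y n
  · obtain ⟨n, hNn, hn⟩ := h
    have hstay : ∀ m, n ≤ m → 0 < y m := fun m hm => by
      induction m, hm using Nat.le_induction with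
      | base => exact hn
      | succ m hm ih => exact hN m (hNn.trans hm) ih
    refine .inl (hy.congr' ?_)
    filter_upwards [eventually_ge_atTop n] with m hm using abs_of_pos (hstay m hm)
  · push Not at h
    refine .inr ((tendsto_neg_atTop_atBot.comp hy).congr' ?_)
    filter_upwards [eventually_ge_atTop N] with m hm
    simp [abs_of_nonpos (h m hm)]

lemma tendsto_runningMean_atTop {x : ℕ → ℝ}
    (h : Tendsto (fun n => x n - runningMean x n) atTop atTop) :
    Tendsto (runningMean x) atTop atTop := by
  have harmonic : Tendsto (fun m => ∑ n ∈ range m, (n : ℝ)⁻¹) atTop atTop :=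
    (not_summable_iff_tendsto_nat_atTop_of_nonneg fun n => by positivity).1
      Real.not_summable_natCast_inv
  refine tendsto_atTop_of_sum_le_sub harmonic ?_
  filter_upwards [eventually_ge_atTop 1,
    (tendsto_add_atTop_iff_nat 1).2 h |>.eventually_ge_atTop 1] with n hn hy
  rw [runningMean_succ_sub (by omega), inv_eq_one_div]
  gcongr

lemma tendsto_atTop_of_sub_runningMean {x : ℕ → ℝ}
    (h : Tendsto (fun n => x n - runningMean x n) atTop atTop) :
    Tendsto x atTop atTop ∧ Tendsto (runningMean x) atTop atTop := by
  have hmean := tendsto_runningMean_atTop h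
  exact ⟨(h.atTop_add_atTop hmean).congr fun n => sub_add_cancel _ _, hmean⟩

lemma tendsto_abs_of_tendsto_abs_sub_runningMean {x : ℕ → ℝ} {B : ℝ}
    (hstep : ∀ᶠ n in atTop, |x (n + 1) - x n| ≤ B)
    (h : Tendsto (fun n => |x n - runningMean x n|) atTop atTop) :
    Tendsto (fun n => |x n|) atTop atTop ∧ Tendsto (fun n => |runningMean x n|) atTop atTop := by
  have hpos : ∀ᶠ n in atTop,
      0 < x n - runningMean x n → 0 < x (n + 1) - runningMean x (n + 1) := by
    filter_upwards [eventually_gt_atTop 0, hstep, h.eventually_gt_atTop B]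
      with n hn hstep_n hbig hpos_n
    rw [abs_of_pos hpos_n] at hbig
    rw [sub_runningMean_succ]
    have hsum : 0 < x n - runningMean x n + (x (n + 1) - x n) := by
      linarith [neg_abs_le (x (n + 1) - x n)]
    positivity
  rcases tendsto_atTop_or_atBot_of_tendsto_abs h hpos with htop | hbot
  · obtain ⟨hx, hmean⟩ := tendsto_atTop_of_sub_runningMean htop
    exact ⟨tendsto_abs_atTop_atTop.comp hx, tendsto_abs_atTop_atTop.comp hmean⟩
  · obtain ⟨hx, hmean⟩ := tendsto_atTop_of_sub_runningMean (x := -x)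
      (by simpa [Function.comp_def, runningMean_neg, neg_add_eq_sub]
        using tendsto_neg_atBot_atTop.comp hbot)
    constructor
    · simpa [Function.comp_def] using tendsto_abs_atTop_atTop.comp hx
    · simpa [Function.comp_def, runningMean_neg] using tendsto_abs_atTop_atTop.comp hmean

lemma EuclideanSpace.norm_fin_one (v : EuclideanSpace ℝ (Fin 1)) : ‖v‖ = |v 0| := by
  simp [EuclideanSpace.norm_eq, Real.sqrt_sq_eq_abs]

theorem one_dimensional_transience_general
    {Ω : Type*} {m0 : MeasurableSpace Ω} {μ : Measure Ω}
    {d : ℕ}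
    (X G Y Δ : ℕ → Ω → EuclideanSpace ℝ (Fin d))
    (hG : ∀ n ω, G n ω = (n : ℝ)⁻¹ • ∑ i ∈ Finset.Icc 1 n, X i ω)
    (hY : ∀ n ω, Y n ω = X n ω - G n ω)
    (hΔ : ∀ n ω, Δ n ω = X (n + 1) ω - X n ω)
    (B : ℝ)
    (hA1i : ∀ n, 1 ≤ n → ∀ᵐ ω ∂μ, ‖Δ n ω‖ ≤ B)
    (hd1 : d = 1)
    (htrans : ∀ᵐ ω ∂μ, Filter.Tendsto (fun n => ‖Y n ω‖) Filter.atTop Filter.atTop) :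
    ∀ᵐ ω ∂μ, Filter.Tendsto (fun n => ‖X n ω‖) Filter.atTop Filter.atTop ∧
      Filter.Tendsto (fun n => ‖G n ω‖) Filter.atTop Filter.atTop := by
  subst hd1
  have hstep : ∀ᵐ ω ∂μ, ∀ n ∈ Set.Ici 1, ‖Δ n ω‖ ≤ B :=
    (ae_ball_iff (Set.to_countable _)).2 hA1i
  filter_upwards [hstep, htrans] with ω hstep_ω htrans_ω
  set x : ℕ → ℝ := fun n => X n ω 0
  have hGx : ∀ n, G n ω 0 = runningMean x n := fun n => by simp [hG, runningMean, x]
  simp only [EuclideanSpace.norm_fin_one, hY, hΔ, PiLp.sub_apply, hGx] at hstep_ω htrans_ω ⊢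
  exact tendsto_abs_of_tendsto_abs_sub_runningMean (eventually_atTop.2 ⟨1, hstep_ω⟩) htrans_ω

/-- Under (A1) with d = 1: if Y_n = X_n − G_n is transient then so are X_n and G_n. -/
theorem one_dimensional_transience
    {Ω : Type*} {m0 : MeasurableSpace Ω} {μ : Measure Ω} [IsProbabilityMeasure μ]
    {d : ℕ} (hd : 1 ≤ d)
    (ℱ : MeasureTheory.Filtration ℕ m0)
    (X G Y Δ : ℕ → Ω → EuclideanSpace ℝ (Fin d))
    (hadapt : ∀ n, StronglyMeasurable[ℱ n] (X n))
    (x₁ : EuclideanSpace ℝ (Fin d)) (hX1 : ∀ ω, X 1 ω = x₁)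
    (hG : ∀ n ω, G n ω = (n : ℝ)⁻¹ • ∑ i ∈ Finset.Icc 1 n, X i ω)
    (hY : ∀ n ω, Y n ω = X n ω - G n ω)
    (hΔ : ∀ n ω, Δ n ω = X (n + 1) ω - X n ω)
    (B ε₀ ρ β : ℝ) (hB : 0 < B) (hε₀ : 0 < ε₀) (hβ0 : 0 ≤ β)
    (hA1i : ∀ n, 1 ≤ n → ∀ᵐ ω ∂μ, ‖Δ n ω‖ ≤ B)
    (hA1ii : ∃ C R : ℝ, 2 ≤ R ∧ ∀ n, 1 ≤ n → ∀ᵐ ω ∂μ, R ≤ ‖Y n ω‖ →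
      ‖(μ[Δ n | ℱ n]) ω - (ρ * ‖Y n ω‖ ^ (-β - 1)) • Y n ω‖ ≤
        C * ‖Y n ω‖ ^ (-β) * Real.log ‖Y n ω‖ ^ (-2 : ℝ))
    (hA1iii : ∀ n, 1 ≤ n → ∀ᵐ ω ∂μ, ∀ e : EuclideanSpace ℝ (Fin d), ‖e‖ = 1 →
      ε₀ ≤ (μ[Set.indicator {ω' | ε₀ ≤ (inner ℝ (Δ n ω') e : ℝ)} (fun _ => (1 : ℝ)) | ℱ n]) ω)
    (hd1 : d = 1)
    (htrans : ∀ᵐ ω ∂μ, Filter.Tendsto (fun n => ‖Y n ω‖) Filter.atTop Filter.atTop) :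
    ∀ᵐ ω ∂μ, Filter.Tendsto (fun n => ‖X n ω‖) Filter.atTop Filter.atTop ∧
      Filter.Tendsto (fun n => ‖G n ω‖) Filter.atTop Filter.atTop :=
  one_dimensional_transience_general (m0 := m0) X G Y Δ hG hY hΔ B hA1i hd1 htrans
end

section
/- Suppose (A1) holds. Then limsup_{n→∞} ‖Y_n‖ = ∞ almost surely, where Y_n = X_n − G_n. -/
open MeasureTheory Filter
open scoped Topology

/-! Fix a unit vector `e`. By (A1)(iii) every step advances by at least `ε₀` along `e` with
conditional probability at least `ε₀`, so each block of `k` consecutive steps is such a run with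
conditional probability at least `ε₀ ^ k`, and almost surely runs of length `k` occur infinitely
often. During a run starting at a large time `n` the walk advances by `k ε₀` along `e`, while the
centre of mass moves by at most `k (k B + ‖Y n‖) / (n + k) ≤ 1`: only `k` of the `n + k` points it
averages are new, and each lies within `k B + ‖Y n‖` of the old centre. Hence `‖Y n‖ > M` or
`‖Y (n + k)‖ > M` as soon as `k ε₀ ≥ 2 M + 2`. -/

section Runs

variable {Ω : Type*} {m0 : MeasurableSpace Ω} {μ : Measure Ω}

lemma mul_measureReal_le_measureReal_inter [IsFiniteMeasure μ] {m : MeasurableSpace Ω}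
    (hm : m ≤ m0) {ε : ℝ} {A S : Set Ω} (hA : MeasurableSet[m0] A) (hS : MeasurableSet[m] S)
    (h : ∀ᵐ ω ∂μ, ε ≤ μ[A.indicator 1 | m] ω) :
    ε * μ.real S ≤ μ.real (S ∩ A) :=
  calc ε * μ.real S = ∫ _ in S, ε ∂μ := by simp [mul_comm]
    _ ≤ ∫ ω in S, μ[A.indicator 1 | m] ω ∂μ :=
      setIntegral_mono_ae (integrable_const ε).integrableOn integrable_condExp.integrableOn h
    _ = ∫ ω in S, A.indicator 1 ω ∂μ :=
      setIntegral_condExp hm ((integrable_const 1).indicator hA) hS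
    _ = μ.real (S ∩ A) := by simp [setIntegral_indicator hA]

variable {ℱ : Filtration ℕ m0} {A : ℕ → Set Ω} {ε : ℝ} {m₀ : ℕ}

lemma measurableSet_biInter_run (hA : ∀ m, MeasurableSet[ℱ (m + 1)] (A m)) (m k : ℕ) :
    MeasurableSet[ℱ (m + k)] (⋂ j < k, A (m + j)) :=
  .iInter fun j => .iInter fun hj => ℱ.mono (by omega) _ (hA (m + j))

lemma pow_mul_measureReal_le_measureReal_inter_run [IsFiniteMeasure μ] (hε : 0 ≤ ε)
    (hA : ∀ m, MeasurableSet[ℱ (m + 1)] (A m))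
    (hcond : ∀ m ≥ m₀, ∀ᵐ ω ∂μ, ε ≤ μ[(A m).indicator 1 | ℱ m] ω)
    {m : ℕ} (hm : m₀ ≤ m) {S : Set Ω} (hS : MeasurableSet[ℱ m] S) (k : ℕ) :
    ε ^ k * μ.real S ≤ μ.real (S ∩ ⋂ j < k, A (m + j)) := by
  induction k with
  | zero => simp
  | succ k ih =>
    have hSrun : MeasurableSet[ℱ (m + k)] (S ∩ ⋂ j < k, A (m + j)) :=
      (ℱ.mono (by omega) _ hS).inter (measurableSet_biInter_run hA m k)
    rw [Set.biInter_lt_succ (fun j => A (m + j)), ← Set.inter_assoc]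
    calc ε ^ (k + 1) * μ.real S = ε * (ε ^ k * μ.real S) := by ring
      _ ≤ ε * μ.real (S ∩ ⋂ j < k, A (m + j)) := mul_le_mul_of_nonneg_left ih hε
      _ ≤ _ := mul_measureReal_le_measureReal_inter (ℱ.le _) (ℱ.le _ _ (hA _)) hSrun
          (hcond (m + k) (by omega))

lemma measureReal_biInter_not_run_le [IsProbabilityMeasure μ] (hε : 0 ≤ ε)
    (hA : ∀ m, MeasurableSet[ℱ (m + 1)] (A m))
    (hcond : ∀ m ≥ m₀, ∀ᵐ ω ∂μ, ε ≤ μ[(A m).indicator 1 | ℱ m] ω) (k J : ℕ) :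
    μ.real (⋂ i < J, (⋂ j < k, A (m₀ + i * k + j))ᶜ) ≤ (1 - ε ^ k) ^ J := by
  have hεk : ε ^ k ≤ 1 := by
    simpa using (pow_mul_measureReal_le_measureReal_inter_run hε hA hcond le_rfl
      MeasurableSet.univ k).trans measureReal_le_one
  induction J with
  | zero => simp
  | succ J ih =>
    set F := ⋂ i < J, (⋂ j < k, A (m₀ + i * k + j))ᶜ
    have hF : MeasurableSet[ℱ (m₀ + J * k)] F :=
      .iInter fun i => .iInter fun hi => (ℱ.mono (by nlinarith) _
        (measurableSet_biInter_run hA (m₀ + i * k) k)).compl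
    have hsplit := measureReal_inter_add_sdiff (μ := μ) (s := F)
      (ℱ.le _ _ (measurableSet_biInter_run hA (m₀ + J * k) k))
    have hrun := pow_mul_measureReal_le_measureReal_inter_run hε hA hcond (by omega) hF k
    rw [Set.biInter_lt_succ (fun i => (⋂ j < k, A (m₀ + i * k + j))ᶜ), ← Set.sdiff_eq]
    calc μ.real (F \ ⋂ j < k, A (m₀ + J * k + j)) ≤ (1 - ε ^ k) * μ.real F := by linarith
      _ ≤ (1 - ε ^ k) * (1 - ε ^ k) ^ J := mul_le_mul_of_nonneg_left ih (by linarith)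
      _ = (1 - ε ^ k) ^ (J + 1) := by ring

lemma ae_exists_run [IsProbabilityMeasure μ] (hε : 0 < ε)
    (hA : ∀ m, MeasurableSet[ℱ (m + 1)] (A m))
    (hcond : ∀ m ≥ m₀, ∀ᵐ ω ∂μ, ε ≤ μ[(A m).indicator 1 | ℱ m] ω) (k : ℕ) :
    ∀ᵐ ω ∂μ, ∃ n ≥ m₀, ∀ j < k, ω ∈ A (n + j) := by
  set bad := {ω | ¬ ∃ n ≥ m₀, ∀ j < k, ω ∈ A (n + j)}
  have hbad : ∀ J, μ.real bad ≤ (1 - ε ^ k) ^ J := fun J =>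
    (measureReal_mono fun ω hω => by
      simp only [Set.mem_iInter, Set.mem_compl_iff]
      exact fun i _ hrun => hω ⟨m₀ + i * k, by omega, fun j hj => by simpa using hrun j hj⟩)
    |>.trans (measureReal_biInter_not_run_le hε.le hA hcond k J)
  have hεk : 0 < ε ^ k := pow_pos hε k
  have hεk1 : ε ^ k ≤ 1 := by simpa using (hbad 1).trans' measureReal_nonneg
  have hlim : Tendsto (fun J : ℕ => (1 - ε ^ k) ^ J) atTop (𝓝 0) :=
    tendsto_pow_atTop_nhds_zero_of_lt_one (by linarith) (by linarith)
  rw [ae_iff, ← measureReal_eq_zero_iff]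
  exact le_antisymm (ge_of_tendsto' hlim hbad) measureReal_nonneg

lemma ae_frequently_run [IsProbabilityMeasure μ] (hε : 0 < ε)
    (hA : ∀ m, MeasurableSet[ℱ (m + 1)] (A m))
    (hcond : ∀ᶠ m in atTop, ∀ᵐ ω ∂μ, ε ≤ μ[(A m).indicator 1 | ℱ m] ω) (k : ℕ) :
    ∀ᵐ ω ∂μ, ∃ᶠ n in atTop, ∀ j < k, ω ∈ A (n + j) := by
  obtain ⟨m₀, hm₀⟩ := eventually_atTop.1 hcond
  have hN : ∀ N, ∀ᵐ ω ∂μ, ∃ n ≥ max N m₀, ∀ j < k, ω ∈ A (n + j) := fun N =>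
    ae_exists_run hε hA (fun m hm => hm₀ m (le_of_max_le_right hm)) k
  filter_upwards [ae_all_iff.2 hN] with ω hω
  exact frequently_atTop.2 fun N =>
    (hω N).imp fun n ⟨hn, hrun⟩ => ⟨le_of_max_le_left hn, hrun⟩

end Runs

noncomputable def centreOfMass {E : Type*} [AddCommGroup E] [Module ℝ E] (x : ℕ → E) (n : ℕ) :
    E :=
  (n : ℝ)⁻¹ • ∑ i ∈ Finset.Icc 1 n, x i

section CentreOfMass

variable {E : Type*} {x : ℕ → E} {n k : ℕ}

lemma centreOfMass_add_sub [AddCommGroup E] [Module ℝ E] (hn : 1 ≤ n) :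
    centreOfMass x (n + k) - centreOfMass x n =
      ((n + k : ℕ) : ℝ)⁻¹ • ∑ i ∈ Finset.Ioc n (n + k), (x i - centreOfMass x n) := by
  have hIcc : ∀ m, Finset.Icc 1 m = Finset.Ioc 0 m := fun m => rfl
  rw [Finset.sum_sub_distrib, Finset.sum_const, Nat.card_Ioc, Nat.add_sub_cancel_left,
    ← Nat.cast_smul_eq_nsmul ℝ, centreOfMass, centreOfMass, hIcc, hIcc,
    ← Finset.sum_Ioc_consecutive _ n.zero_le (n.le_add_right k)]
  have hn0 : (n : ℝ) ≠ 0 := by positivity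
  push_cast
  match_scalars <;> field_simp; ring

lemma norm_centreOfMass_add_sub_le [SeminormedAddCommGroup E] [NormedSpace ℝ E] (hn : 1 ≤ n)
    {D : ℝ} (hD : ∀ i ∈ Finset.Ioc n (n + k), ‖x i - centreOfMass x n‖ ≤ D) :
    ‖centreOfMass x (n + k) - centreOfMass x n‖ ≤ k * D / (n + k) := by
  rw [centreOfMass_add_sub hn, norm_smul, norm_inv, Real.norm_natCast, ← div_eq_inv_mul]
  push_cast
  gcongr
  calc _ ≤ ∑ i ∈ Finset.Ioc n (n + k), ‖x i - centreOfMass x n‖ := norm_sum_le _ _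
    _ ≤ ∑ _i ∈ Finset.Ioc n (n + k), D := Finset.sum_le_sum hD
    _ = k * D := by simp

lemma norm_sub_le_mul_of_norm_succ_sub_le [SeminormedAddCommGroup E] {B : ℝ}
    (hB : ∀ i ≥ n, ‖x (i + 1) - x i‖ ≤ B) (j : ℕ) : ‖x (n + j) - x n‖ ≤ j * B := by
  rw [← dist_eq_norm, dist_comm]
  simpa using dist_le_Ico_sum_of_dist_le (f := x) (d := fun _ => B) (n.le_add_right j)
    fun hi _ => by rw [dist_comm, dist_eq_norm]; exact hB _ hi

variable [NormedAddCommGroup E] [InnerProductSpace ℝ E] {e : E} {ε : ℝ}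

lemma mul_le_inner_sub_of_le_inner_succ_sub
    (hrun : ∀ j < k, ε ≤ inner ℝ (x (n + j + 1) - x (n + j)) e) :
    k * ε ≤ inner ℝ (x (n + k) - x n) e := by
  have htel := Finset.sum_range_sub (fun j => x (n + j)) k
  simp only [add_zero] at htel
  rw [← htel, sum_inner]
  simpa using Finset.card_nsmul_le_sum (Finset.range k) _ ε
    fun j hj => by simpa [add_assoc] using hrun j (Finset.mem_range.1 hj)

lemma lt_norm_sub_centreOfMass_add (he : ‖e‖ = 1) (hn : 1 ≤ n) {B M : ℝ}
    (hB : ∀ i ≥ n, ‖x (i + 1) - x i‖ ≤ B)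
    (hrun : ∀ j < k, ε ≤ inner ℝ (x (n + j + 1) - x (n + j)) e)
    (hYn : ‖x n - centreOfMass x n‖ ≤ M) (hk : 2 * M + 2 ≤ k * ε)
    (hnk : k * (k * B + M) ≤ n) :
    M < ‖x (n + k) - centreOfMass x (n + k)‖ := by
  have hB0 : 0 ≤ B := (norm_nonneg _).trans (hB n le_rfl)
  have hD : ∀ i ∈ Finset.Ioc n (n + k), ‖x i - centreOfMass x n‖ ≤ k * B + M := by
    intro i hi
    obtain ⟨j, rfl⟩ := Nat.exists_eq_add_of_le (Finset.mem_Ioc.1 hi).1.le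
    have hjk : (j : ℝ) ≤ k := by exact_mod_cast (by simpa using (Finset.mem_Ioc.1 hi).2)
    calc ‖x (n + j) - centreOfMass x n‖ ≤ ‖x (n + j) - x n‖ + ‖x n - centreOfMass x n‖ :=
          norm_sub_le_norm_sub_add_norm_sub _ _ _
      _ ≤ j * B + M := add_le_add (norm_sub_le_mul_of_norm_succ_sub_le hB j) hYn
      _ ≤ k * B + M := by gcongr
  have hG : ‖centreOfMass x (n + k) - centreOfMass x n‖ ≤ 1 :=
    (norm_centreOfMass_add_sub_le hn hD).trans (div_le_one_of_le₀ (by linarith) (by positivity))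
  have hinner : ∀ v : E, |inner ℝ v e| ≤ ‖v‖ := fun v => by
    simpa [he] using abs_real_inner_le_norm v e
  have hYe := neg_le_of_abs_le ((hinner (x n - centreOfMass x n)).trans hYn)
  have hGe := le_of_abs_le ((hinner (centreOfMass x (n + k) - centreOfMass x n)).trans hG)
  have hsplit : x (n + k) - centreOfMass x (n + k) = (x (n + k) - x n)
      + (x n - centreOfMass x n) - (centreOfMass x (n + k) - centreOfMass x n) := by abel
  calc M < k * ε - M - 1 := by linarith
    _ ≤ inner ℝ (x (n + k) - centreOfMass x (n + k)) e := by
      rw [hsplit, inner_sub_left, inner_add_left]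
      linarith [mul_le_inner_sub_of_le_inner_succ_sub hrun]
    _ ≤ ‖x (n + k) - centreOfMass x (n + k)‖ := by simpa [he] using real_inner_le_norm _ e

lemma frequently_lt_norm_sub_centreOfMass (he : ‖e‖ = 1) {B M : ℝ}
    (hB : ∀ᶠ i in atTop, ‖x (i + 1) - x i‖ ≤ B)
    (hrun : ∃ᶠ n in atTop, ∀ j < k, ε ≤ inner ℝ (x (n + j + 1) - x (n + j)) e)
    (hk : 2 * M + 2 ≤ k * ε) :
    ∃ᶠ n in atTop, M < ‖x n - centreOfMass x n‖ := by
  obtain ⟨N, hN⟩ := eventually_atTop.1 hB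
  refine frequently_atTop.2 fun a => ?_
  obtain ⟨n, hn, hrun_n⟩ :=
    frequently_atTop.1 hrun (max a (max N (max 1 ⌈k * (k * B + M)⌉₊)))
  simp only [max_le_iff, Nat.ceil_le] at hn
  by_cases hYn : M < ‖x n - centreOfMass x n‖
  · exact ⟨n, hn.1, hYn⟩
  · exact ⟨n + k, by omega, lt_norm_sub_centreOfMass_add he hn.2.2.1
      (fun i hi => hN i (by omega)) hrun_n (not_lt.1 hYn) hk hn.2.2.2⟩

end CentreOfMass

lemma limsup_ofReal_eq_top_of_frequently_lt {α : Type*} {f : Filter α} {u : α → ℝ}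
    (h : ∀ M : ℕ, ∃ᶠ a in f, (M : ℝ) < u a) :
    limsup (fun a => ENNReal.ofReal (u a)) f = ⊤ := by
  refine top_unique (ENNReal.iSup_natCast ▸ iSup_le fun M => le_limsup_of_frequently_le ?_)
  exact (h M).mono fun a ha => by simpa using ENNReal.ofReal_le_ofReal ha.le

theorem limsup_infinite_general
    {Ω : Type*} {m0 : MeasurableSpace Ω} {μ : Measure Ω} [IsProbabilityMeasure μ]
    {d : ℕ} (hd : 1 ≤ d)
    (ℱ : MeasureTheory.Filtration ℕ m0)
    (X G Y Δ : ℕ → Ω → EuclideanSpace ℝ (Fin d))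
    (hadapt : ∀ n, StronglyMeasurable[ℱ n] (X n))
    (hG : ∀ n ω, G n ω = (n : ℝ)⁻¹ • ∑ i ∈ Finset.Icc 1 n, X i ω)
    (hY : ∀ n ω, Y n ω = X n ω - G n ω)
    (hΔ : ∀ n ω, Δ n ω = X (n + 1) ω - X n ω)
    (B ε₀ : ℝ) (hε₀ : 0 < ε₀)
    (hA1i : ∀ n, 1 ≤ n → ∀ᵐ ω ∂μ, ‖Δ n ω‖ ≤ B)
    (hA1iii : ∀ n, 1 ≤ n → ∀ᵐ ω ∂μ, ∀ e : EuclideanSpace ℝ (Fin d), ‖e‖ = 1 →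
      ε₀ ≤ (μ[Set.indicator {ω' | ε₀ ≤ (inner ℝ (Δ n ω') e : ℝ)} (fun _ => (1 : ℝ)) | ℱ n]) ω)
    :
    ∀ᵐ ω ∂μ, Filter.limsup (fun n => ENNReal.ofReal ‖Y n ω‖) Filter.atTop = ⊤ := by
  set e : EuclideanSpace ℝ (Fin d) := EuclideanSpace.single ⟨0, hd⟩ 1
  have he : ‖e‖ = 1 := by simp [e]
  set A : ℕ → Set Ω := fun n => {ω | ε₀ ≤ inner ℝ (Δ n ω) e}
  have hA : ∀ n, MeasurableSet[ℱ (n + 1)] (A n) := fun n => by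
    have hΔn : StronglyMeasurable[ℱ (n + 1)] (Δ n) := by
      rw [show Δ n = fun ω => X (n + 1) ω - X n ω from funext (hΔ n)]
      exact (hadapt _).sub ((hadapt n).mono (ℱ.mono n.le_succ))
    exact (hΔn.inner stronglyMeasurable_const).measurable measurableSet_Ici
  have hcond : ∀ᶠ n in atTop, ∀ᵐ ω ∂μ, ε₀ ≤ μ[(A n).indicator 1 | ℱ n] ω :=
    eventually_atTop.2 ⟨1, fun n hn => (hA1iii n hn).mono fun ω h => h e he⟩
  have hstep : ∀ᵐ ω ∂μ, ∀ n ≥ 1, ‖Δ n ω‖ ≤ B := by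
    rw [ae_all_iff]
    exact fun n => if hn : 1 ≤ n then (hA1i n hn).mono fun ω h _ => h
      else .of_forall fun ω h => absurd h hn
  let k : ℕ → ℕ := fun M => ⌈(2 * M + 2) / ε₀⌉₊
  have hk : ∀ M : ℕ, 2 * (M : ℝ) + 2 ≤ k M * ε₀ := fun M =>
    (div_le_iff₀ hε₀).1 (Nat.le_ceil _)
  filter_upwards [hstep, ae_all_iff.2 fun M => ae_frequently_run hε₀ hA hcond (k M)]
    with ω hωB hωrun
  have hYω : ∀ n, Y n ω = X n ω - centreOfMass (X · ω) n := fun n => by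
    rw [hY, hG, centreOfMass]
  simp only [hYω]
  refine limsup_ofReal_eq_top_of_frequently_lt fun M => ?_
  refine frequently_lt_norm_sub_centreOfMass (B := B) he ?_
    ((hωrun M).mono fun n hn j hj => ?_) (hk M)
  · exact eventually_atTop.2 ⟨1, fun i hi => hΔ i ω ▸ hωB i hi⟩
  · exact hΔ (n + j) ω ▸ hn j hj

/-- Under (A1), limsup ‖Y_n‖ = ∞ almost surely. -/
theorem limsup_infinite
    {Ω : Type*} {m0 : MeasurableSpace Ω} {μ : Measure Ω} [IsProbabilityMeasure μ]
    {d : ℕ} (hd : 1 ≤ d)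
    (ℱ : MeasureTheory.Filtration ℕ m0)
    (X G Y Δ : ℕ → Ω → EuclideanSpace ℝ (Fin d))
    (hadapt : ∀ n, StronglyMeasurable[ℱ n] (X n))
    (x₁ : EuclideanSpace ℝ (Fin d)) (hX1 : ∀ ω, X 1 ω = x₁)
    (hG : ∀ n ω, G n ω = (n : ℝ)⁻¹ • ∑ i ∈ Finset.Icc 1 n, X i ω)
    (hY : ∀ n ω, Y n ω = X n ω - G n ω)
    (hΔ : ∀ n ω, Δ n ω = X (n + 1) ω - X n ω)
    (B ε₀ ρ β : ℝ) (hB : 0 < B) (hε₀ : 0 < ε₀) (hβ0 : 0 ≤ β)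
    (hA1i : ∀ n, 1 ≤ n → ∀ᵐ ω ∂μ, ‖Δ n ω‖ ≤ B)
    (hA1ii : ∃ C R : ℝ, 2 ≤ R ∧ ∀ n, 1 ≤ n → ∀ᵐ ω ∂μ, R ≤ ‖Y n ω‖ →
      ‖(μ[Δ n | ℱ n]) ω - (ρ * ‖Y n ω‖ ^ (-β - 1)) • Y n ω‖ ≤
        C * ‖Y n ω‖ ^ (-β) * Real.log ‖Y n ω‖ ^ (-2 : ℝ))
    (hA1iii : ∀ n, 1 ≤ n → ∀ᵐ ω ∂μ, ∀ e : EuclideanSpace ℝ (Fin d), ‖e‖ = 1 →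
      ε₀ ≤ (μ[Set.indicator {ω' | ε₀ ≤ (inner ℝ (Δ n ω') e : ℝ)} (fun _ => (1 : ℝ)) | ℱ n]) ω)
    :
    ∀ᵐ ω ∂μ, Filter.limsup (fun n => ENNReal.ofReal ‖Y n ω‖) Filter.atTop = ⊤ :=
  limsup_infinite_general hd ℱ X G Y Δ hadapt hG hY hΔ B ε₀ hε₀ hA1i hA1iii
end

section
/- Suppose (A1) holds with β ∈ [0,1). Then there exist constants C' < ∞ and R' ≥ 2 such that for every n ≥ 1, almost surely on the event {‖Y_n‖ ≥ R'}: |E_n[‖Y_{n+1}‖ − ‖Y_n‖] − ρ‖Y_n‖^{−β} + ‖Y_n‖/(n+1)| ≤ C'‖Y_n‖^{−β}(log‖Y_n‖)^{−2}. -/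
/-!
Since `Y (n + 1) = n / (n + 1) • (Y n + Δ n)`, the increment of `‖Y‖` is `n / (n + 1)` times
`‖Y n + Δ n‖ - ‖Y n‖`, minus `‖Y n‖ / (n + 1)`. To first order `‖y + δ‖ - ‖y‖ = ⟪y / ‖y‖, δ⟫ + r`
with `0 ≤ r ≤ ‖δ‖² / (2‖y‖)`, so the conditional drift is the radial component `ρ ‖Y n‖ ^ (-β)` of
`E_n[Δ n]` up to the error allowed by (A1)(ii), an error `B² / (2‖Y n‖)`, and
`ρ ‖Y n‖ ^ (-β) / (n + 1)`.
The last two are `O(‖Y n‖ ^ (-β) (log ‖Y n‖) ^ (-2))` because `‖Y n‖ ≤ n B` and, for large `t`,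
`(log t)² ≤ t ^ (1 - β)` and `(log t)² ≤ t`.
-/

open MeasureTheory Filter Real
open scoped RealInnerProductSpace

section Geometry

variable {E : Type*} [NormedAddCommGroup E] [InnerProductSpace ℝ E]

theorem norm_mul_norm_add_sub_norm_sub_inner (a b : E) :
    ‖a‖ * (‖a + b‖ - ‖a‖ - ⟪‖a‖⁻¹ • a, b⟫) = (‖b‖ ^ 2 - (‖a + b‖ - ‖a‖) ^ 2) / 2 := by
  rcases eq_or_ne a 0 with rfl | ha
  · simp
  have hsq : ‖a + b‖ ^ 2 = ‖a‖ ^ 2 + 2 * ⟪a, b⟫ + ‖b‖ ^ 2 := norm_add_sq_real a b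
  rw [real_inner_smul_left]
  field_simp
  linear_combination hsq

theorem norm_add_sub_norm_sub_inner_nonneg (a b : E) : 0 ≤ ‖a + b‖ - ‖a‖ - ⟪‖a‖⁻¹ • a, b⟫ := by
  rcases eq_or_ne a 0 with rfl | ha
  · simp
  refine nonneg_of_mul_nonneg_right ?_ (norm_pos_iff.2 ha)
  rw [norm_mul_norm_add_sub_norm_sub_inner]
  have h : |‖a + b‖ - ‖a‖| ≤ ‖b‖ := by simpa using abs_norm_sub_norm_le (a + b) a
  have := sq_le_sq' (abs_le.1 h).1 (abs_le.1 h).2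
  linarith

theorem norm_mul_norm_add_sub_norm_sub_inner_le (a b : E) :
    ‖a‖ * (‖a + b‖ - ‖a‖ - ⟪‖a‖⁻¹ • a, b⟫) ≤ ‖b‖ ^ 2 / 2 := by
  rw [norm_mul_norm_add_sub_norm_sub_inner]
  linarith [sq_nonneg (‖a + b‖ - ‖a‖)]

theorem abs_inner_inv_norm_smul_sub_le (y v : E) (s : ℝ) :
    |⟪‖y‖⁻¹ • y, v⟫ - s * ‖y‖| ≤ ‖v - s • y‖ := by
  rcases eq_or_ne y 0 with rfl | hy
  · simp
  have hyy : ⟪‖y‖⁻¹ • y, y⟫ = ‖y‖ := by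
    rw [real_inner_smul_left, real_inner_self_eq_norm_sq]
    field_simp
  calc |⟪‖y‖⁻¹ • y, v⟫ - s * ‖y‖| = |⟪‖y‖⁻¹ • y, v - s • y⟫| := by
        rw [inner_sub_right, real_inner_smul_right, hyy]
    _ ≤ ‖‖y‖⁻¹ • y‖ * ‖v - s • y‖ := abs_real_inner_le_norm _ _
    _ = ‖v - s • y‖ := by
        rw [norm_smul, norm_inv, norm_norm, inv_mul_cancel₀ (norm_ne_zero_iff.2 hy), one_mul]

end Geometry

section ConditionalExpectation

variable {Ω E : Type*} {m m0 : MeasurableSpace Ω} {μ : Measure Ω}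

theorem integrable_norm_add_sub_norm [NormedAddCommGroup E] {Y f : Ω → E}
    (hY : AEStronglyMeasurable Y μ) (hf : Integrable f μ) :
    Integrable (fun ω ↦ ‖Y ω + f ω‖ - ‖Y ω‖) μ := by
  refine hf.norm.mono' ((hY.add hf.1).norm.sub hY.norm) (ae_of_all _ fun ω ↦ ?_)
  simpa using abs_norm_sub_norm_le (Y ω + f ω) (Y ω)

theorem condExp_norm_smul_add_sub_norm [NormedAddCommGroup E] [NormedSpace ℝ E]
    [IsFiniteMeasure μ] (hm : m ≤ m0) {Y f : Ω → E} (hY : StronglyMeasurable[m] Y)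
    (hY_int : Integrable Y μ) (hf : Integrable f μ) {q : ℝ} (hq : 0 ≤ q) :
    μ[fun ω ↦ ‖q • (Y ω + f ω)‖ - ‖Y ω‖|m] =ᵐ[μ]
      fun ω ↦ q * μ[fun ω ↦ ‖Y ω + f ω‖ - ‖Y ω‖|m] ω - (1 - q) * ‖Y ω‖ := by
  have hsplit : (fun ω ↦ ‖q • (Y ω + f ω)‖ - ‖Y ω‖) =
      q • (fun ω ↦ ‖Y ω + f ω‖ - ‖Y ω‖) - (1 - q) • fun ω ↦ ‖Y ω‖ := by
    ext ω
    simp only [norm_smul, Real.norm_of_nonneg hq, Pi.sub_apply, Pi.smul_apply, smul_eq_mul]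
    ring
  have hinc := integrable_norm_add_sub_norm (hY.mono hm).aestronglyMeasurable hf
  rw [hsplit]
  filter_upwards [condExp_sub (hinc.smul q) (hY_int.norm.smul (1 - q)) m,
    condExp_smul q (fun ω ↦ ‖Y ω + f ω‖ - ‖Y ω‖) m,
    condExp_smul (1 - q) (fun ω ↦ ‖Y ω‖) m] with ω hsub hsmul₁ hsmul₂
  rw [hsub, Pi.sub_apply, hsmul₁, hsmul₂, condExp_of_stronglyMeasurable hm hY.norm hY_int.norm]
  rfl

theorem mul_condExp_le_of_mul_le [IsFiniteMeasure μ] (hm : m ≤ m0) {g h : Ω → ℝ}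
    (hg : StronglyMeasurable[m] g) (hh : Integrable h μ) (hgh : Integrable (g * h) μ) {K : ℝ}
    (hK : ∀ᵐ ω ∂μ, g ω * h ω ≤ K) : ∀ᵐ ω ∂μ, g ω * μ[h|m] ω ≤ K := by
  have hmono : μ[g * h|m] ≤ᵐ[μ] μ[fun _ ↦ K|m] := condExp_mono hgh (integrable_const K) hK
  rw [condExp_const hm] at hmono
  filter_upwards [condExp_mul_of_stronglyMeasurable_left hg hgh hh, hmono] with ω hpull hle
  rwa [hpull] at hle

theorem condExp_norm_add_sub_norm_sub_inner [NormedAddCommGroup E] [InnerProductSpace ℝ E]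
    [CompleteSpace E] [IsFiniteMeasure μ] (hm : m ≤ m0) {Y f : Ω → E}
    (hY : StronglyMeasurable[m] Y) (hf : Integrable f μ) {B : ℝ} (hfB : ∀ᵐ ω ∂μ, ‖f ω‖ ≤ B) :
    ∀ᵐ ω ∂μ, 0 ≤ μ[fun ω ↦ ‖Y ω + f ω‖ - ‖Y ω‖|m] ω - ⟪‖Y ω‖⁻¹ • Y ω, μ[f|m] ω⟫ ∧
      ‖Y ω‖ * (μ[fun ω ↦ ‖Y ω + f ω‖ - ‖Y ω‖|m] ω - ⟪‖Y ω‖⁻¹ • Y ω, μ[f|m] ω⟫) ≤ B ^ 2 / 2 := by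
  set c : Ω → E := fun ω ↦ ‖Y ω‖⁻¹ • Y ω
  set r : Ω → ℝ := fun ω ↦ ‖Y ω + f ω‖ - ‖Y ω‖ - ⟪c ω, f ω⟫
  have hc : StronglyMeasurable[m] c := hY.norm.measurable.inv.stronglyMeasurable.smul hY
  have hc_le : ∀ ω, ‖c ω‖ ≤ 1 := fun ω ↦ by
    simpa using inv_norm_smul_mem_unitClosedBall (Y ω)
  have hY₀ : AEStronglyMeasurable Y μ := (hY.mono hm).aestronglyMeasurable
  have hinner : Integrable (fun ω ↦ ⟪c ω, f ω⟫) μ := by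
    refine hf.norm.mono' ((hc.mono hm).aestronglyMeasurable.inner hf.1) (ae_of_all _ fun ω ↦ ?_)
    calc ‖⟪c ω, f ω⟫‖ ≤ ‖c ω‖ * ‖f ω‖ := norm_inner_le_norm _ _
      _ ≤ ‖f ω‖ := mul_le_of_le_one_left (norm_nonneg _) (hc_le ω)
  have hr : Integrable r μ := (integrable_norm_add_sub_norm hY₀ hf).sub hinner
  have hr_nonneg : ∀ ω, 0 ≤ r ω := fun ω ↦ norm_add_sub_norm_sub_inner_nonneg _ _
  have hYr_le : ∀ᵐ ω ∂μ, ‖Y ω‖ * r ω ≤ B ^ 2 / 2 := by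
    filter_upwards [hfB] with ω hω
    have := pow_le_pow_left₀ (norm_nonneg _) hω 2
    linarith [norm_mul_norm_add_sub_norm_sub_inner_le (Y ω) (f ω)]
  have hYr : Integrable ((fun ω ↦ ‖Y ω‖) * r) μ := by
    refine .of_bound (hY₀.norm.mul hr.1) (B ^ 2 / 2) ?_
    filter_upwards [hYr_le] with ω hω
    rwa [Pi.mul_apply, Real.norm_of_nonneg (mul_nonneg (norm_nonneg _) (hr_nonneg ω))]
  have hsplit : μ[fun ω ↦ ‖Y ω + f ω‖ - ‖Y ω‖|m] =ᵐ[μ] fun ω ↦ ⟪c ω, μ[f|m] ω⟫ + μ[r|m] ω := by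
    have hpull : μ[fun ω ↦ ⟪c ω, f ω⟫|m] =ᵐ[μ] fun ω ↦ ⟪c ω, μ[f|m] ω⟫ :=
      condExp_stronglyMeasurable_bilin_of_bound (innerSL ℝ) hm hc hf 1 (ae_of_all _ hc_le)
    have hsum : (fun ω ↦ ‖Y ω + f ω‖ - ‖Y ω‖) = (fun ω ↦ ⟪c ω, f ω⟫) + r := by
      ext ω; simp [r]
    rw [hsum]
    filter_upwards [condExp_add hinner hr m, hpull] with ω hadd hpull
    rw [hadd, Pi.add_apply, hpull]
  filter_upwards [hsplit, condExp_nonneg (ae_of_all _ hr_nonneg),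
    mul_condExp_le_of_mul_le hm hY.norm hr hYr hYr_le] with ω hsplit hnonneg hle
  rw [hsplit, add_sub_cancel_left]
  exact ⟨hnonneg, hle⟩

end ConditionalExpectation

section CentreOfMass

variable {E : Type*} [NormedAddCommGroup E] [NormedSpace ℝ E] {x G Y : ℕ → E}

theorem sub_centreOfMass_succ (hG : ∀ n, G n = (n : ℝ)⁻¹ • ∑ i ∈ Finset.Icc 1 n, x i)
    (hY : ∀ n, Y n = x n - G n) {n : ℕ} (hn : 1 ≤ n) :
    Y (n + 1) = ((n : ℝ) / (n + 1)) • (Y n + (x (n + 1) - x n)) := by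
  have hn₀ : (n : ℝ) ≠ 0 := Nat.cast_ne_zero.2 (by omega)
  rw [hY, hY, hG, hG, Finset.sum_Icc_succ_top (by omega)]
  push_cast
  match_scalars <;> field_simp <;> ring

theorem norm_sub_centreOfMass_le (hG : ∀ n, G n = (n : ℝ)⁻¹ • ∑ i ∈ Finset.Icc 1 n, x i)
    (hY : ∀ n, Y n = x n - G n) {B : ℝ} (hx : ∀ n, 1 ≤ n → ‖x (n + 1) - x n‖ ≤ B) :
    ∀ n, 1 ≤ n → ‖Y n‖ ≤ n * B := by
  intro n hn
  induction n, hn using Nat.le_induction with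
  | base =>
    have hY₁ : Y 1 = 0 := by simp [hY, hG]
    simpa [hY₁] using (norm_nonneg _).trans (hx 1 le_rfl)
  | succ n hn ih =>
    have hq : ‖(n : ℝ) / (n + 1)‖ ≤ 1 := by
      rw [Real.norm_of_nonneg (by positivity), div_le_one (by positivity)]
      linarith
    calc ‖Y (n + 1)‖ = ‖(n : ℝ) / (n + 1)‖ * ‖Y n + (x (n + 1) - x n)‖ := by
          rw [sub_centreOfMass_succ hG hY hn, norm_smul]
      _ ≤ 1 * (n * B + B) :=
          mul_le_mul hq ((norm_add_le _ _).trans (add_le_add ih (hx n hn))) (norm_nonneg _)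
            zero_le_one
      _ = (n + 1 : ℕ) * B := by push_cast; ring

theorem StronglyAdapted.sub_centreOfMass {Ω : Type*} {m0 : MeasurableSpace Ω}
    {ℱ : Filtration ℕ m0} {X G Y : ℕ → Ω → E} (hX : StronglyAdapted ℱ X)
    (hG : ∀ n ω, G n ω = (n : ℝ)⁻¹ • ∑ i ∈ Finset.Icc 1 n, X i ω)
    (hY : ∀ n ω, Y n ω = X n ω - G n ω) : StronglyAdapted ℱ Y := fun n ↦ by
  have hYn : Y n = fun ω ↦ X n ω - (n : ℝ)⁻¹ • ∑ i ∈ Finset.Icc 1 n, X i ω := by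
    ext1 ω; rw [hY, hG]
  rw [hYn]
  refine (hX n).sub (.const_smul (Finset.stronglyMeasurable_fun_sum _ fun i hi ↦ ?_) _)
  exact (hX i).mono (ℱ.mono (Finset.mem_Icc.1 hi).2)

end CentreOfMass

theorem eventually_inv_le_rpow_neg_mul_log_rpow_neg_two {β : ℝ} (hβ : β < 1) :
    ∀ᶠ t : ℝ in atTop, t⁻¹ ≤ t ^ (-β) * log t ^ (-2 : ℝ) ∧
      t ^ (-β) * t⁻¹ ≤ t ^ (-β) * log t ^ (-2 : ℝ) := by
  have hlog : ∀ s : ℝ, 0 < s → ∀ᶠ t : ℝ in atTop, log t ^ (2 : ℝ) ≤ t ^ s := fun s hs ↦ by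
    filter_upwards [(isLittleO_log_rpow_rpow_atTop 2 hs).bound one_pos, eventually_gt_atTop 0]
      with t hle ht
    rw [one_mul, Real.norm_of_nonneg (rpow_pos_of_pos ht s).le] at hle
    exact (le_abs_self _).trans hle
  filter_upwards [hlog _ (sub_pos.2 hβ), hlog 1 one_pos, eventually_gt_atTop 1]
    with t hβlog hlog₁ ht
  have hlog_pos : 0 < log t ^ (2 : ℝ) := rpow_pos_of_pos (log_pos ht) _
  have ht₀ : 0 < t := one_pos.trans ht
  rw [rpow_neg (log_pos ht).le]
  constructor
  · calc t⁻¹ = t ^ (-β) * (t ^ (1 - β))⁻¹ := by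
          rw [← rpow_neg ht₀.le, ← rpow_add ht₀, ← rpow_neg_one]; ring_nf
      _ ≤ t ^ (-β) * (log t ^ (2 : ℝ))⁻¹ := by gcongr
  · rw [rpow_one] at hlog₁
    gcongr

-- Applied with `t = ‖Y n‖`, `x = E_n[‖Y n + Δ n‖ - ‖Y n‖]`, `a = ⟪Y n / ‖Y n‖, E_n[Δ n]⟫`,
-- `T = t ^ (-β)`.
theorem abs_div_succ_mul_sub_le {t n B x a ρ T ε C : ℝ} (ht : 0 < t) (hn : 0 ≤ n)
    (htn : t ≤ n * B) (hxa : 0 ≤ x - a) (hxa_le : t * (x - a) ≤ B ^ 2 / 2)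
    (ha : |a - ρ * T| ≤ C * ε) (hT : 0 ≤ T) (htε : t⁻¹ ≤ ε) (hTtε : T * t⁻¹ ≤ ε) :
    |n / (n + 1) * x - ρ * T| ≤ (C + B * |ρ| + B ^ 2 / 2) * ε := by
  have hn₁ : 0 < n + 1 := by linarith
  have hB : 0 ≤ B := by
    by_contra! hB
    nlinarith
  set q := n / (n + 1)
  have hq₀ : 0 ≤ q := by positivity
  have hq₁ : q ≤ 1 := by rw [div_le_one hn₁]; linarith
  have hq_compl : 1 - q = (n + 1)⁻¹ := by simp only [q]; field_simp; ring
  have hdrift : |q * (a - ρ * T)| ≤ C * ε := by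
    rw [abs_mul, abs_of_nonneg hq₀]
    exact (mul_le_of_le_one_left (abs_nonneg _) hq₁).trans ha
  have hrem : |q * (x - a)| ≤ B ^ 2 / 2 * ε := by
    have hxa_inv : x - a ≤ B ^ 2 / 2 * t⁻¹ := by
      rw [← div_eq_mul_inv, le_div_iff₀ ht]; linarith
    rw [abs_of_nonneg (mul_nonneg hq₀ hxa)]
    calc q * (x - a) ≤ x - a := mul_le_of_le_one_left hxa hq₁
      _ ≤ B ^ 2 / 2 * t⁻¹ := hxa_inv
      _ ≤ B ^ 2 / 2 * ε := by gcongr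
  have hsucc : |ρ * T * (1 - q)| ≤ B * |ρ| * ε := by
    have hinv : (n + 1)⁻¹ ≤ B * t⁻¹ := by
      rw [← div_eq_mul_inv, le_div_iff₀ ht, inv_mul_eq_div, div_le_iff₀ hn₁]; linarith
    rw [hq_compl, abs_mul, abs_mul, abs_of_nonneg hT, abs_of_pos (inv_pos.2 hn₁)]
    calc |ρ| * T * (n + 1)⁻¹ ≤ |ρ| * T * (B * t⁻¹) := by gcongr
      _ = B * |ρ| * (T * t⁻¹) := by ring
      _ ≤ B * |ρ| * ε := by gcongr
  calc |q * x - ρ * T| = |q * (x - a) + q * (a - ρ * T) - ρ * T * (1 - q)| := by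
        congr 1; ring
    _ ≤ |q * (x - a)| + |q * (a - ρ * T)| + |ρ * T * (1 - q)| :=
        (abs_sub _ _).trans (add_le_add_left (abs_add_le _ _) _)
    _ ≤ (C + B * |ρ| + B ^ 2 / 2) * ε := by linarith

theorem drift_estimate_supercritical_general
    {Ω : Type*} {m0 : MeasurableSpace Ω} {μ : Measure Ω} [IsProbabilityMeasure μ]
    {d : ℕ}
    (ℱ : MeasureTheory.Filtration ℕ m0)
    (X G Y Δ : ℕ → Ω → EuclideanSpace ℝ (Fin d))
    (hadapt : ∀ n, StronglyMeasurable[ℱ n] (X n))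
    (hG : ∀ n ω, G n ω = (n : ℝ)⁻¹ • ∑ i ∈ Finset.Icc 1 n, X i ω)
    (hY : ∀ n ω, Y n ω = X n ω - G n ω)
    (hΔ : ∀ n ω, Δ n ω = X (n + 1) ω - X n ω)
    (B ρ β : ℝ)
    (hA1i : ∀ n, 1 ≤ n → ∀ᵐ ω ∂μ, ‖Δ n ω‖ ≤ B)
    (hA1ii : ∃ C R : ℝ, 2 ≤ R ∧ ∀ n, 1 ≤ n → ∀ᵐ ω ∂μ, R ≤ ‖Y n ω‖ →
      ‖(μ[Δ n | ℱ n]) ω - (ρ * ‖Y n ω‖ ^ (-β - 1)) • Y n ω‖ ≤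
        C * ‖Y n ω‖ ^ (-β) * Real.log ‖Y n ω‖ ^ (-2 : ℝ))
    (hβ1 : β < 1) :
    ∃ C' R' : ℝ, 2 ≤ R' ∧ ∀ n, 1 ≤ n → ∀ᵐ ω ∂μ, R' ≤ ‖Y n ω‖ →
      |(μ[(fun ω' => ‖Y (n + 1) ω'‖ - ‖Y n ω'‖) | ℱ n]) ω
          - ρ * ‖Y n ω‖ ^ (-β) + ‖Y n ω‖ / ((n : ℝ) + 1)|
        ≤ C' * ‖Y n ω‖ ^ (-β) * Real.log ‖Y n ω‖ ^ (-2 : ℝ) := by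
  obtain ⟨C, R, -, hdrift⟩ := hA1ii
  obtain ⟨M, hM⟩ := eventually_atTop.1 (eventually_inv_le_rpow_neg_mul_log_rpow_neg_two hβ1)
  have hY_adapted : StronglyAdapted ℱ Y := StronglyAdapted.sub_centreOfMass hadapt hG hY
  have hΔ_int : ∀ n, 1 ≤ n → Integrable (Δ n) μ := fun n hn ↦ by
    refine .of_bound ?_ B (hA1i n hn)
    rw [show Δ n = X (n + 1) - X n from funext (hΔ n)]
    exact (((hadapt _).mono (ℱ.le _)).sub ((hadapt n).mono (ℱ.le n))).aestronglyMeasurable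
  have hY_le : ∀ᵐ ω ∂μ, ∀ n, 1 ≤ n → ‖Y n ω‖ ≤ n * B := by
    filter_upwards [ae_all_iff.2 fun n ↦ eventually_imp_distrib_left.2 (hA1i n)] with ω hω
    exact norm_sub_centreOfMass_le (fun n ↦ hG n ω) (fun n ↦ hY n ω) fun n hn ↦ hΔ n ω ▸ hω n hn
  refine ⟨C + B * |ρ| + B ^ 2 / 2, max R (max M 2), le_max_of_le_right (le_max_right _ _),
    fun n hn ↦ ?_⟩
  have hY_int : Integrable (Y n) μ :=
    .of_bound ((hY_adapted n).mono (ℱ.le n)).aestronglyMeasurable (n * B)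
      (by filter_upwards [hY_le] with ω hω using hω n hn)
  have hstep : μ[fun ω ↦ ‖Y (n + 1) ω‖ - ‖Y n ω‖|ℱ n] =ᵐ[μ] fun ω ↦
      n / (n + 1) * μ[fun ω ↦ ‖Y n ω + Δ n ω‖ - ‖Y n ω‖|ℱ n] ω - (1 - n / (n + 1)) * ‖Y n ω‖ := by
    have hrec : (fun ω ↦ ‖Y (n + 1) ω‖ - ‖Y n ω‖) =
        fun ω ↦ ‖((n : ℝ) / (n + 1)) • (Y n ω + Δ n ω)‖ - ‖Y n ω‖ := by
      ext ω; rw [sub_centreOfMass_succ (fun k ↦ hG k ω) (fun k ↦ hY k ω) hn, ← hΔ]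
    rw [hrec]
    exact condExp_norm_smul_add_sub_norm (ℱ.le n) (hY_adapted n) hY_int (hΔ_int n hn)
      (by positivity)
  filter_upwards [hstep, condExp_norm_add_sub_norm_sub_inner (ℱ.le n) (hY_adapted n)
    (hΔ_int n hn) (hA1i n hn), hdrift n hn, hY_le] with ω hstep hrem hD hY_le hω
  obtain ⟨hRt, hMt⟩ := max_le_iff.1 hω
  obtain ⟨hMt, h2t⟩ := max_le_iff.1 hMt
  have ht : 0 < ‖Y n ω‖ := by linarith
  have ha := abs_inner_inv_norm_smul_sub_le (Y n ω) (μ[Δ n|ℱ n] ω) (ρ * ‖Y n ω‖ ^ (-β - 1))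
  rw [mul_assoc ρ, ← rpow_add_one ht.ne', sub_add_cancel] at ha
  calc _ = |n / (n + 1) * μ[fun ω ↦ ‖Y n ω + Δ n ω‖ - ‖Y n ω‖|ℱ n] ω - ρ * ‖Y n ω‖ ^ (-β)| := by
        rw [hstep]; congr 1; field_simp; ring
    _ ≤ (C + B * |ρ| + B ^ 2 / 2) * (‖Y n ω‖ ^ (-β) * log ‖Y n ω‖ ^ (-2 : ℝ)) :=
        abs_div_succ_mul_sub_le ht n.cast_nonneg (hY_le n hn) hrem.1 hrem.2
          (ha.trans ((hD hRt).trans_eq (mul_assoc _ _ _))) (rpow_nonneg ht.le _) (hM _ hMt).1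
          (hM _ hMt).2
    _ = _ := by ring

/-- Under (A1) with β ∈ [0,1), the drift of ‖Y_n‖ is
ρ‖Y_n‖^{−β} − ‖Y_n‖/(n+1) + O(‖Y_n‖^{−β}(log ‖Y_n‖)^{−2}). -/
theorem drift_estimate_supercritical
    {Ω : Type*} {m0 : MeasurableSpace Ω} {μ : Measure Ω} [IsProbabilityMeasure μ]
    {d : ℕ} (hd : 1 ≤ d)
    (ℱ : MeasureTheory.Filtration ℕ m0)
    (X G Y Δ : ℕ → Ω → EuclideanSpace ℝ (Fin d))
    (hadapt : ∀ n, StronglyMeasurable[ℱ n] (X n))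
    (x₁ : EuclideanSpace ℝ (Fin d)) (hX1 : ∀ ω, X 1 ω = x₁)
    (hG : ∀ n ω, G n ω = (n : ℝ)⁻¹ • ∑ i ∈ Finset.Icc 1 n, X i ω)
    (hY : ∀ n ω, Y n ω = X n ω - G n ω)
    (hΔ : ∀ n ω, Δ n ω = X (n + 1) ω - X n ω)
    (B ε₀ ρ β : ℝ) (hB : 0 < B) (hε₀ : 0 < ε₀) (hβ0 : 0 ≤ β)
    (hA1i : ∀ n, 1 ≤ n → ∀ᵐ ω ∂μ, ‖Δ n ω‖ ≤ B)
    (hA1ii : ∃ C R : ℝ, 2 ≤ R ∧ ∀ n, 1 ≤ n → ∀ᵐ ω ∂μ, R ≤ ‖Y n ω‖ →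
      ‖(μ[Δ n | ℱ n]) ω - (ρ * ‖Y n ω‖ ^ (-β - 1)) • Y n ω‖ ≤
        C * ‖Y n ω‖ ^ (-β) * Real.log ‖Y n ω‖ ^ (-2 : ℝ))
    (hA1iii : ∀ n, 1 ≤ n → ∀ᵐ ω ∂μ, ∀ e : EuclideanSpace ℝ (Fin d), ‖e‖ = 1 →
      ε₀ ≤ (μ[Set.indicator {ω' | ε₀ ≤ (inner ℝ (Δ n ω') e : ℝ)} (fun _ => (1 : ℝ)) | ℱ n]) ω)
    (hβ1 : β < 1) :
    ∃ C' R' : ℝ, 2 ≤ R' ∧ ∀ n, 1 ≤ n → ∀ᵐ ω ∂μ, R' ≤ ‖Y n ω‖ →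
      |(μ[(fun ω' => ‖Y (n + 1) ω'‖ - ‖Y n ω'‖) | ℱ n]) ω
          - ρ * ‖Y n ω‖ ^ (-β) + ‖Y n ω‖ / ((n : ℝ) + 1)|
        ≤ C' * ‖Y n ω‖ ^ (-β) * Real.log ‖Y n ω‖ ^ (-2 : ℝ) :=
  drift_estimate_supercritical_general ℱ X G Y Δ hadapt hG hY hΔ B ρ β hA1i hA1ii hβ1
end

section
/- Let (Z_n)_{n≥1} be adapted, [0,∞)-valued, with bounded jumps and limsup_{n→∞} Z_n = ∞ a.s. Suppose there exist β ∈ [0,1) and ρ ∈ ℝ \ {0} such that for every ε > 0 there exists R ≥ 1 with: for every n, a.s. on {Z_n ≥ R}, |E_n[Z_{n+1} − Z_n] − ρ Z_n^{−β} + Z_n/n| ≤ ε Z_n^{−β} + ε Z_n/n. Then Z_n is transient (Z_n → ∞ a.s.) if ρ > 0, and recurrent (liminf_{n→∞} Z_n < ∞ a.s.) if ρ < 0. -/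
/-!
For `ρ < 0` the drift is nonpositive above some level `R`, so `Z` frozen at its first exit from
`[R, Λ]` is a nonnegative supermartingale. By the maximal inequality, staying above `R` from time
`k` on while reaching `Λ` has probability at most `E[Z k] / Λ`; as `Z` is unbounded, it returns
below `R` infinitely often. (`Z k` is integrable because the drift condition at time `1`, where it
contains `-Z 1`, forces `Z 1` to be bounded.)

For `ρ > 0` the Lyapunov function is `(max (Z n) r)⁻¹ + A n ^ (-η)` with `η = 1 / (1 + β)`.
Expanding `x ↦ x⁻¹` to second order, the drift `ρ x ^ (-β)` dominates the error terms where
`x ^ (1 + β) ≤ c n`; elsewhere `x⁻¹ ≤ (c n) ^ (-η)` and the error is `O(n ^ (-1 - η))`, which the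
deterministic compensator `A n ^ (-η)` absorbs. So the Lyapunov function is a supermartingale while
`Z ≥ r`, and once `Z` has reached `M` after time `n₀` it drops below `r` again with probability at
most `r (1 / M + A n₀ ^ (-η))`. Letting `M, n₀ → ∞`, `Z` eventually stays above every level.
-/

open MeasureTheory Filter Real
open scoped ENNReal Topology

lemma inv_add_le_of_abs_le {x δ C : ℝ} (hx : 0 < x) (hxC : 2 * C ≤ x) (hδ : |δ| ≤ C) :
    (x + δ)⁻¹ ≤ x⁻¹ - δ * x⁻¹ ^ 2 + 2 * C ^ 2 * x⁻¹ ^ 3 := by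
  obtain ⟨hδl, hδu⟩ := abs_le.1 hδ
  have hxδ : x / 2 ≤ x + δ := by linarith
  have hxδ0 : 0 < x + δ := by linarith
  have hexpand : (x + δ)⁻¹ = x⁻¹ - δ * x⁻¹ ^ 2 + δ ^ 2 * x⁻¹ ^ 2 * (x + δ)⁻¹ := by
    field_simp
    ring
  have hrem : (x + δ)⁻¹ ≤ 2 * x⁻¹ := by
    simpa [div_eq_mul_inv, mul_comm] using inv_anti₀ (by positivity) hxδ
  have hδ2 : δ ^ 2 ≤ C ^ 2 := sq_le_sq' (by linarith) (by linarith)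
  have : δ ^ 2 * x⁻¹ ^ 2 * (x + δ)⁻¹ ≤ C ^ 2 * x⁻¹ ^ 2 * (2 * x⁻¹) := by
    gcongr
  linarith

lemma mul_rpow_neg_div_le_rpow_neg_sub {a η : ℝ} (ha : 0 < a) (hη0 : 0 ≤ η) (hη1 : η ≤ 1) :
    η * a ^ (-η) / (a + 1) ≤ a ^ (-η) - (a + 1) ^ (-η) := by
  have hb : 0 < a + 1 := by linarith
  have hbern : (a / (a + 1)) ^ η ≤ 1 - η / (a + 1) := by
    have h := rpow_one_add_le_one_add_mul_self (s := -(a + 1)⁻¹)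
      (by rw [neg_le_neg_iff]; exact inv_le_one_of_one_le₀ (by linarith)) hη0 hη1
    rwa [show 1 + -(a + 1)⁻¹ = a / (a + 1) by field_simp; ring,
      show 1 + η * -(a + 1)⁻¹ = 1 - η / (a + 1) by ring] at h
  have hsplit : (a + 1) ^ (-η) = a ^ (-η) * (a / (a + 1)) ^ η := by
    rw [div_rpow ha.le hb.le, rpow_neg ha.le, rpow_neg hb.le]
    field_simp
  have hpos : 0 ≤ a ^ (-η) := rpow_nonneg ha.le _
  rw [hsplit]
  calc η * a ^ (-η) / (a + 1) = a ^ (-η) * (1 - (1 - η / (a + 1))) := by ring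
    _ ≤ a ^ (-η) * (1 - (a / (a + 1)) ^ η) := by gcongr
    _ = _ := by ring

/-- Bound on `E_j[(Z (j + 1))⁻¹] - (Z j)⁻¹` where `Z j = x`, from the second-order Taylor
expansion of `x ↦ x⁻¹` (jumps at most `C`) and the drift lower bound
`ρ / 2 * x ^ (-β) - 3 / 2 * (x / j)`. -/
noncomputable def invIncrementBound (C β ρ x : ℝ) (j : ℕ) : ℝ :=
  2 * C ^ 2 * x⁻¹ ^ 3 - x⁻¹ ^ 2 * (ρ / 2 * x ^ (-β) - 3 / 2 * (x / j))

lemma invIncrementBound_nonpos {C β ρ x : ℝ} {j : ℕ} (hρ : 0 < ρ) (hx : 0 < x) (hj : 0 < j)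
    (hxC : 16 * C ^ 2 / ρ ≤ x ^ (1 - β)) (hxj : x ^ (1 + β) ≤ ρ / 12 * j) :
    invIncrementBound C β ρ x j ≤ 0 := by
  have hj0 : (0 : ℝ) < j := by exact_mod_cast hj
  have hy : 0 < x ^ (-β) := rpow_pos_of_pos hx _
  rw [sub_eq_add_neg, rpow_add hx, rpow_one, div_le_iff₀ hρ] at hxC
  rw [rpow_add hx, rpow_one] at hxj
  have hjump : 2 * C ^ 2 * x⁻¹ ≤ ρ / 8 * x ^ (-β) := by
    rw [← div_eq_mul_inv, div_le_iff₀ hx]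
    nlinarith
  have hdrift : 3 / 2 * (x / j) ≤ ρ / 8 * x ^ (-β) := by
    have hxy : x ≤ ρ / 12 * j * x ^ (-β) :=
      calc x = x * x ^ β * x ^ (-β) := by
            rw [mul_assoc, ← rpow_add hx, add_neg_cancel, rpow_zero, mul_one]
        _ ≤ ρ / 12 * j * x ^ (-β) := by gcongr
    have : x / j ≤ ρ / 12 * x ^ (-β) := by rw [div_le_iff₀ hj0]; linarith
    linarith
  have : invIncrementBound C β ρ x j
      = x⁻¹ ^ 2 * (2 * C ^ 2 * x⁻¹ - ρ / 2 * x ^ (-β) + 3 / 2 * (x / j)) := by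
    unfold invIncrementBound; ring
  rw [this]
  exact mul_nonpos_of_nonneg_of_nonpos (by positivity) (by nlinarith)

lemma invIncrementBound_le {C β ρ x : ℝ} {j : ℕ} (hβ : -1 < β) (hβ1 : β ≤ 1) (hρ : 0 < ρ)
    (hx : 0 < x) (hj : 1 ≤ j) (hxj : ρ / 12 * j < x ^ (1 + β)) :
    invIncrementBound C β ρ x j
      ≤ (3 / 2 * (ρ / 12) ^ (-(1 + β)⁻¹) + 2 * C ^ 2 * ((ρ / 12) ^ (-(1 + β)⁻¹)) ^ 3)
        * (j : ℝ) ^ (-(1 + β)⁻¹) / j := by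
  set η := (1 + β)⁻¹
  set c := (ρ / 12) ^ (-η) with hc
  set q := (j : ℝ) ^ (-η) with hq
  have hj1 : (1 : ℝ) ≤ j := by exact_mod_cast hj
  have hj0 : (0 : ℝ) < j := by linarith
  have hη0 : 0 < η := inv_pos.2 (by linarith)
  have hxinv : x⁻¹ ≤ c * q := by
    have hpow : (ρ / 12 * j) ^ η ≤ x := by
      calc (ρ / 12 * j) ^ η ≤ (x ^ (1 + β)) ^ η := rpow_le_rpow (by positivity) hxj.le hη0.le
        _ = x := rpow_rpow_inv hx.le (by linarith)
    rw [hc, hq, ← mul_rpow (by positivity) hj0.le, rpow_neg (by positivity)]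
    exact inv_anti₀ (by positivity) hpow
  have hq2 : q ^ 2 ≤ (j : ℝ)⁻¹ := by
    rw [hq, ← rpow_natCast, ← rpow_mul hj0.le, ← rpow_neg_one]
    refine rpow_le_rpow_of_exponent_le hj1 ?_
    have : (2 : ℝ)⁻¹ ≤ η := inv_anti₀ (by linarith) (by linarith)
    push_cast
    linarith
  have hjump : 2 * C ^ 2 * x⁻¹ ^ 3 ≤ 2 * C ^ 2 * c ^ 3 * q / j :=
    calc 2 * C ^ 2 * x⁻¹ ^ 3 ≤ 2 * C ^ 2 * (c * q) ^ 3 := by gcongr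
      _ = 2 * C ^ 2 * c ^ 3 * q * q ^ 2 := by ring
      _ ≤ 2 * C ^ 2 * c ^ 3 * q * (j : ℝ)⁻¹ := by gcongr
      _ = _ := by ring
  have hdrift : x⁻¹ ^ 2 * (3 / 2 * (x / j)) ≤ 3 / 2 * c * q / j :=
    calc x⁻¹ ^ 2 * (3 / 2 * (x / j)) = 3 / 2 * x⁻¹ / j := by field_simp
      _ ≤ 3 / 2 * (c * q) / j := by gcongr
      _ = _ := by ring
  have hpos : 0 ≤ x⁻¹ ^ 2 * (ρ / 2 * x ^ (-β)) := by positivity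
  unfold invIncrementBound
  have : (3 / 2 * c + 2 * C ^ 2 * c ^ 3) * q / j
      = 3 / 2 * c * q / j + 2 * C ^ 2 * c ^ 3 * q / j := by ring
  rw [this]
  linarith [mul_sub (x⁻¹ ^ 2) (ρ / 2 * x ^ (-β)) (3 / 2 * (x / j))]

lemma exists_compensator {β ρ : ℝ} (C : ℝ) (hβ0 : 0 ≤ β) (hβ1 : β < 1) (hρ : 0 < ρ) :
    ∃ x₀ : ℝ, ∃ a : ℕ → ℝ, (∀ n, 0 ≤ a n) ∧ AntitoneOn a (Set.Ici 1) ∧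
      Tendsto a atTop (𝓝 0) ∧ ∀ x : ℝ, x₀ ≤ x → ∀ j : ℕ, 1 ≤ j →
        invIncrementBound C β ρ x j + (a (j + 1) - a j) ≤ 0 := by
  set η := (1 + β)⁻¹
  set K := 3 / 2 * (ρ / 12) ^ (-η) + 2 * C ^ 2 * ((ρ / 12) ^ (-η)) ^ 3
  have hK0 : 0 ≤ K := by positivity
  have hη0 : 0 < η := inv_pos.2 (by linarith)
  have hη1 : η ≤ 1 := inv_le_one_of_one_le₀ (by linarith)
  obtain ⟨x₀, hx₀⟩ := ((eventually_gt_atTop 0).and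
    ((tendsto_rpow_atTop (sub_pos.2 hβ1)).eventually_ge_atTop
      (16 * C ^ 2 / ρ))).exists_forall_of_atTop
  refine ⟨x₀, fun n => 2 * K / η * (n : ℝ) ^ (-η), fun n => by positivity, ?_, ?_,
    fun x hx j hj => ?_⟩
  · intro n hn k _ hnk
    have hn0 : (0 : ℝ) < n := by simp only [Set.mem_Ici] at hn; exact_mod_cast hn
    exact mul_le_mul_of_nonneg_left
      (rpow_le_rpow_of_nonpos hn0 (by exact_mod_cast hnk) (by linarith)) (by positivity)
  · simpa using ((tendsto_rpow_neg_atTop hη0).comp tendsto_natCast_atTop_atTop).const_mul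
      (2 * K / η)
  have hj0 : (0 : ℝ) < j := by exact_mod_cast hj
  obtain ⟨hx0, hxC⟩ := hx₀ x hx
  have hbound : invIncrementBound C β ρ x j ≤ K * (j : ℝ) ^ (-η) / j := by
    rcases le_or_gt (x ^ (1 + β)) (ρ / 12 * j) with hsmall | hlarge
    · exact (invIncrementBound_nonpos hρ hx0 hj hxC hsmall).trans (by positivity)
    · exact invIncrementBound_le (by linarith) hβ1.le hρ hx0 hj hlarge
  have hdecay : K * (j : ℝ) ^ (-η) / j ≤ 2 * K / η * ((j : ℝ) ^ (-η) - ((j : ℝ) + 1) ^ (-η)) :=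
    calc K * (j : ℝ) ^ (-η) / j ≤ 2 * K / η * (η * (j : ℝ) ^ (-η) / (j + 1)) := by
          rw [div_le_iff₀ hj0]
          field_simp
          nlinarith [rpow_nonneg hj0.le (-η), (by exact_mod_cast hj : (1 : ℝ) ≤ j)]
      _ ≤ _ := by gcongr; exact mul_rpow_neg_div_le_rpow_neg_sub hj0 hη0.le hη1
  push_cast
  linarith

lemma frequently_lt_of_limsup_ofReal_eq_top {u : ℕ → ℝ}
    (h : limsup (fun n => ENNReal.ofReal (u n)) atTop = ⊤) (b : ℝ) : ∃ᶠ n in atTop, b < u n := by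
  by_contra hb
  have hle : limsup (fun n => ENNReal.ofReal (u n)) atTop ≤ ENNReal.ofReal b :=
    limsup_le_of_le (by isBoundedDefault)
      ((not_frequently.1 hb).mono fun n hn => ENNReal.ofReal_le_ofReal (not_lt.1 hn))
  exact ENNReal.ofReal_ne_top (top_le_iff.1 (h ▸ hle))

section Stopping

variable {Ω : Type*} {m0 : MeasurableSpace Ω} {μ : Measure Ω}

lemma ae_condExp_le_mul_condExp_add {m : MeasurableSpace Ω} [IsFiniteMeasure μ] (hm : m ≤ m0)
    {s : Set Ω} (hs : MeasurableSet[m] s)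
    {X D g h : Ω → ℝ} {c : ℝ} (hX : Integrable X μ) (hD : Integrable D μ)
    (hg : StronglyMeasurable[m] g) (hgc : ∀ ω, ‖g ω‖ ≤ c) (hh : StronglyMeasurable[m] h)
    (hhint : Integrable h μ) (hle : ∀ᵐ ω ∂μ, ω ∈ s → X ω ≤ g ω * D ω + h ω) :
    ∀ᵐ ω ∂μ, ω ∈ s → μ[X | m] ω ≤ g ω * μ[D | m] ω + h ω := by
  have hgD : Integrable (g * D) μ :=
    hD.bdd_mul (hg.mono hm).aestronglyMeasurable (ae_of_all _ hgc)
  have hY : Integrable (g * D + h) μ := hgD.add hhint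
  have hmono : μ[s.indicator X | m] ≤ᵐ[μ] μ[s.indicator (g * D + h) | m] := by
    refine condExp_mono (hX.indicator (hm _ hs)) (hY.indicator (hm _ hs)) ?_
    filter_upwards [hle] with ω hω
    by_cases hωs : ω ∈ s
    · simpa [Set.indicator_of_mem hωs] using hω hωs
    · simp [Set.indicator_of_notMem hωs]
  have hpull : μ[g * D + h | m] =ᵐ[μ] g * μ[D | m] + h :=
    (condExp_add hgD hhint m).trans <|
      (condExp_mul_of_stronglyMeasurable_left hg hgD hD).add
        (condExp_of_stronglyMeasurable hm hh hhint).eventuallyEq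
  filter_upwards [hmono, condExp_indicator hX hs, condExp_indicator hY hs, hpull]
    with ω hω hXs hYs hpullω hωs
  rw [hXs, hYs, Set.indicator_of_mem hωs, Set.indicator_of_mem hωs, hpullω] at hω
  exact hω

lemma setIntegral_indicator_nonpos_of_condExp_nonpos {m : MeasurableSpace Ω} (hm : m ≤ m0)
    [SigmaFinite (μ.trim hm)] {X : Ω → ℝ} (hX : Integrable X μ) {A s : Set Ω}
    (hA : MeasurableSet[m] A) (hs : MeasurableSet[m] s) (h : ∀ᵐ ω ∂μ, ω ∈ A → μ[X | m] ω ≤ 0) :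
    ∫ ω in s, A.indicator X ω ∂μ ≤ 0 := by
  rw [setIntegral_indicator (hm _ hA), ← setIntegral_condExp hm hX (hs.inter hA)]
  refine setIntegral_nonpos_of_ae_restrict ?_
  filter_upwards [ae_restrict_mem (hm _ (hs.inter hA)), ae_restrict_of_ae h] with ω hω hle
  exact hle hω.2

lemma measure_le_of_forall_inter_le [IsProbabilityMeasure μ] {T : ℕ → Set Ω}
    (hT : ∀ t, MeasurableSet (T t)) (hdisj : Pairwise (Function.onFun Disjoint T))
    (hcover : ∀ᵐ ω ∂μ, ∃ t, ω ∈ T t) {E : Set Ω} {c : ℝ≥0∞}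
    (h : ∀ t, μ (T t ∩ E) ≤ c * μ (T t)) : μ E ≤ c :=
  calc μ E ≤ μ (⋃ t, T t ∩ E) :=
        measure_mono_ae (hcover.mono fun ω ⟨t, ht⟩ hE => Set.mem_iUnion.2 ⟨t, ht, hE⟩)
    _ ≤ ∑' t, μ (T t ∩ E) := measure_iUnion_le _
    _ ≤ ∑' t, c * μ (T t) := ENNReal.tsum_le_tsum h
    _ = c * μ (⋃ t, T t) := by rw [ENNReal.tsum_mul_left, measure_iUnion hdisj hT]
    _ ≤ c := mul_le_of_le_one_right' prob_le_one

def IsFirstExit (S : ℕ → Set Ω) (k t : ℕ) (ω : Ω) : Prop :=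
  k ≤ t ∧ ω ∉ S t ∧ ∀ i, k ≤ i → i < t → ω ∈ S i

lemma exists_isFirstExit {S : ℕ → Set Ω} {k : ℕ} {ω : Ω} (h : ∃ t, k ≤ t ∧ ω ∉ S t) :
    ∃ t, IsFirstExit S k t ω := by
  classical
  refine ⟨Nat.find h, (Nat.find_spec h).1, (Nat.find_spec h).2, fun i hki hi => ?_⟩
  by_contra hni
  exact Nat.find_min h hi ⟨hki, hni⟩

lemma IsFirstExit.le {S : ℕ → Set Ω} {k t i : ℕ} {ω : Ω} (h : IsFirstExit S k t ω)
    (hki : k ≤ i) (hi : ω ∉ S i) : t ≤ i :=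
  not_lt.1 fun hit => hi (h.2.2 i hki hit)

lemma IsFirstExit.unique {S : ℕ → Set Ω} {k t t' : ℕ} {ω : Ω} (h : IsFirstExit S k t ω)
    (h' : IsFirstExit S k t' ω) : t = t' :=
  le_antisymm (h.le h'.1 h'.2.1) (h'.le h.1 h.2.1)

lemma measurableSet_isFirstExit (ℱ : Filtration ℕ m0) {S : ℕ → Set Ω}
    (hS : ∀ n, MeasurableSet[ℱ n] (S n)) (k t : ℕ) :
    MeasurableSet[ℱ t] {ω | IsFirstExit S k t ω} := by
  have : {ω | IsFirstExit S k t ω}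
      = {_ω | k ≤ t} ∩ (S t)ᶜ ∩ ⋂ i, ⋂ (_ : k ≤ i), ⋂ (_ : i < t), S i := by
    ext ω
    simp [IsFirstExit, and_assoc]
  rw [this]
  exact ((MeasurableSet.const _).inter (hS t).compl).inter <| .iInter fun i => .iInter fun _ =>
    .iInter fun hit => ℱ.mono hit.le _ (hS i)

def stayIn (S : ℕ → Set Ω) (k j : ℕ) : Set Ω := {ω | ∀ i, k ≤ i → i ≤ j → ω ∈ S i}

lemma mem_stayIn {S : ℕ → Set Ω} {k j : ℕ} {ω : Ω} :
    ω ∈ stayIn S k j ↔ ∀ i, k ≤ i → i ≤ j → ω ∈ S i :=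
  Iff.rfl

lemma measurableSet_stayIn (ℱ : Filtration ℕ m0) {S : ℕ → Set Ω}
    (hS : ∀ n, MeasurableSet[ℱ n] (S n)) (k j : ℕ) : MeasurableSet[ℱ j] (stayIn S k j) := by
  have : stayIn S k j = ⋂ i, ⋂ (_ : k ≤ i), ⋂ (_ : i ≤ j), S i := by
    ext ω
    simp [stayIn]
  rw [this]
  exact .iInter fun i => .iInter fun _ => .iInter fun hij => ℱ.mono hij _ (hS i)

/-- The process `F` started at time `k` and frozen at its first exit from `S`, read at time `m`. -/
noncomputable def stopAtExit (F : ℕ → Ω → ℝ) (S : ℕ → Set Ω) (k m : ℕ) (ω : Ω) : ℝ :=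
  F k ω + ∑ j ∈ Finset.Ico k m, (stayIn S k j).indicator (fun ω => F (j + 1) ω - F j ω) ω

variable {F : ℕ → Ω → ℝ} {S : ℕ → Set Ω} {k m : ℕ}

lemma stopAtExit_of_le (hmk : m ≤ k) (ω : Ω) : stopAtExit F S k m ω = F k ω := by
  simp [stopAtExit, Finset.Ico_eq_empty_of_le hmk]

lemma stopAtExit_succ (hkm : k ≤ m) (ω : Ω) :
    stopAtExit F S k (m + 1) ω
      = stopAtExit F S k m ω + (stayIn S k m).indicator (fun ω => F (m + 1) ω - F m ω) ω := by
  simp [stopAtExit, Finset.sum_Ico_succ_top hkm, add_assoc]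

lemma stopAtExit_eq_of_forall_mem {ω : Ω} (hkm : k ≤ m) (h : ∀ i, k ≤ i → i < m → ω ∈ S i) :
    stopAtExit F S k m ω = F m ω := by
  induction m, hkm using Nat.le_induction with
  | base => exact stopAtExit_of_le le_rfl ω
  | succ m hkm ih =>
    rw [stopAtExit_succ hkm, ih fun i hki him => h i hki (by omega),
      Set.indicator_of_mem (mem_stayIn.2 fun i hki him => h i hki (by omega))]
    ring

lemma IsFirstExit.stopAtExit_eq {t : ℕ} {ω : Ω} (h : IsFirstExit S k t ω) (htm : t ≤ m) :
    stopAtExit F S k m ω = F t ω := by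
  induction m, htm using Nat.le_induction with
  | base => exact stopAtExit_eq_of_forall_mem h.1 h.2.2
  | succ m htm ih =>
    rw [stopAtExit_succ (h.1.trans htm), ih,
      Set.indicator_of_notMem fun hm => h.2.1 (mem_stayIn.1 hm t h.1 htm), add_zero]

lemma stopAtExit_nonneg (hF : ∀ n ω, 0 ≤ F n ω) (ω : Ω) : 0 ≤ stopAtExit F S k m ω := by
  rcases le_total m k with hmk | hkm
  · exact stopAtExit_of_le hmk ω ▸ hF k ω
  by_cases h : ∀ i, k ≤ i → i < m → ω ∈ S i
  · exact stopAtExit_eq_of_forall_mem hkm h ▸ hF m ω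
  push Not at h
  obtain ⟨i, hki, him, hi⟩ := h
  obtain ⟨t, ht⟩ := exists_isFirstExit ⟨i, hki, hi⟩
  exact ht.stopAtExit_eq ((ht.le hki hi).trans him.le) ▸ hF t ω

lemma integrable_stopAtExit (ℱ : Filtration ℕ m0) (hFint : ∀ n, k ≤ n → Integrable (F n) μ)
    (hS : ∀ n, MeasurableSet[ℱ n] (S n)) (m : ℕ) : Integrable (stopAtExit F S k m) μ := by
  refine (hFint k le_rfl).add (integrable_finsetSum _ fun j hj => ?_)
  rw [Finset.mem_Ico] at hj
  exact ((hFint (j + 1) (by omega)).sub (hFint j hj.1)).indicator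
    (ℱ.le j _ (measurableSet_stayIn ℱ hS k j))

lemma setIntegral_stopAtExit_le [IsFiniteMeasure μ] (ℱ : Filtration ℕ m0)
    (hFint : ∀ n, k ≤ n → Integrable (F n) μ) (hS : ∀ n, MeasurableSet[ℱ n] (S n))
    (hdrift : ∀ j, k ≤ j → ∀ᵐ ω ∂μ, ω ∈ stayIn S k j →
      μ[fun ω => F (j + 1) ω - F j ω | ℱ j] ω ≤ 0)
    {s : Set Ω} (hs : MeasurableSet[ℱ k] s) (m : ℕ) :
    ∫ ω in s, stopAtExit F S k m ω ∂μ ≤ ∫ ω in s, F k ω ∂μ := by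
  rcases le_total m k with hmk | hkm
  · simp only [stopAtExit_of_le hmk, le_refl]
  induction m, hkm using Nat.le_induction with
  | base => simp only [stopAtExit_of_le le_rfl, le_refl]
  | succ m hkm ih =>
    have hinc : Integrable (fun ω => F (m + 1) ω - F m ω) μ :=
      (hFint (m + 1) (by omega)).sub (hFint m hkm)
    have hstep := setIntegral_indicator_nonpos_of_condExp_nonpos (ℱ.le m) hinc
      (measurableSet_stayIn ℱ hS k m) (ℱ.mono hkm _ hs) (hdrift m hkm)
    simp only [stopAtExit_succ hkm]
    rw [integral_add (integrable_stopAtExit ℱ hFint hS m).restrict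
      (hinc.indicator (ℱ.le m _ (measurableSet_stayIn ℱ hS k m))).restrict]
    linarith

theorem measure_inter_firstExit_ge_le [IsFiniteMeasure μ] (ℱ : Filtration ℕ m0)
    (hF : ∀ n ω, 0 ≤ F n ω) (hFint : ∀ n, k ≤ n → Integrable (F n) μ)
    (hS : ∀ n, MeasurableSet[ℱ n] (S n))
    (hdrift : ∀ j, k ≤ j → ∀ᵐ ω ∂μ, ω ∈ stayIn S k j →
      μ[fun ω => F (j + 1) ω - F j ω | ℱ j] ω ≤ 0)
    {s : Set Ω} (hs : MeasurableSet[ℱ k] s) {a : ℝ} (ha : 0 < a) :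
    μ (s ∩ {ω | ∃ t, IsFirstExit S k t ω ∧ a ≤ F t ω})
      ≤ ENNReal.ofReal ((∫ ω in s, F k ω ∂μ) / a) := by
  set G : ℕ → Set Ω := fun m => s ∩ {ω | ∃ t, IsFirstExit S k t ω ∧ t ≤ m ∧ a ≤ F t ω}
  have hG : s ∩ {ω | ∃ t, IsFirstExit S k t ω ∧ a ≤ F t ω} = ⋃ m, G m := by
    ext ω
    simp only [G, Set.mem_inter_iff, Set.mem_ofPred_eq, Set.mem_iUnion]
    exact ⟨fun ⟨hω, t, ht, hat⟩ => ⟨t, hω, t, ht, le_rfl, hat⟩,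
      fun ⟨_, hω, t, ht, _, hat⟩ => ⟨hω, t, ht, hat⟩⟩
  have hmono : Monotone G := fun m m' hmm' ω ⟨hω, t, ht, htm, hat⟩ =>
    ⟨hω, t, ht, htm.trans hmm', hat⟩
  rw [hG, hmono.measure_iUnion]
  refine iSup_le fun m => ?_
  have hs0 : MeasurableSet s := ℱ.le k _ hs
  have hGm : G m ⊆ {ω | a ≤ stopAtExit F S k m ω} ∩ s := fun ω ⟨hω, t, ht, htm, hat⟩ =>
    ⟨show a ≤ stopAtExit F S k m ω by rw [ht.stopAtExit_eq htm]; exact hat, hω⟩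
  have hmarkov := mul_meas_ge_le_integral_of_nonneg (μ := μ.restrict s)
    (ae_of_all _ fun ω => stopAtExit_nonneg hF ω) (integrable_stopAtExit ℱ hFint hS m).restrict a
  have hle := hmarkov.trans (setIntegral_stopAtExit_le ℱ hFint hS hdrift hs m)
  calc μ (G m) ≤ μ.restrict s {ω | a ≤ stopAtExit F S k m ω} := by
        rw [Measure.restrict_apply' hs0]; exact measure_mono hGm
    _ = ENNReal.ofReal ((μ.restrict s).real {ω | a ≤ stopAtExit F S k m ω}) :=
        (ENNReal.ofReal_toReal (measure_ne_top _ _)).symm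
    _ ≤ ENNReal.ofReal ((∫ ω in s, F k ω ∂μ) / a) :=
        ENNReal.ofReal_le_ofReal (by rw [le_div_iff₀ ha]; linarith)

end Stopping

section Supercritical

variable {Ω : Type*} {m0 : MeasurableSpace Ω} {μ : Measure Ω} (ℱ : Filtration ℕ m0)
  {Z : ℕ → Ω → ℝ}

def HasSupercriticalDrift (μ : Measure Ω) (ℱ : Filtration ℕ m0) (Z : ℕ → Ω → ℝ) (β ρ : ℝ) :
    Prop :=
  ∀ ε : ℝ, 0 < ε → ∃ R : ℝ, 1 ≤ R ∧ ∀ n, 1 ≤ n → ∀ᵐ ω ∂μ, R ≤ Z n ω →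
    |(μ[(fun ω' => Z (n + 1) ω' - Z n ω') | ℱ n]) ω - ρ * Z n ω ^ (-β) + Z n ω / n|
      ≤ ε * Z n ω ^ (-β) + ε * Z n ω / n

lemma integrable_increment [IsFiniteMeasure μ] (hadapt : ∀ n, StronglyMeasurable[ℱ n] (Z n))
    {C : ℝ} (hC : ∀ n, ∀ᵐ ω ∂μ, |Z (n + 1) ω - Z n ω| ≤ C) (n : ℕ) :
    Integrable (fun ω => Z (n + 1) ω - Z n ω) μ :=
  .of_bound (((hadapt (n + 1)).mono (ℱ.le _)).sub ((hadapt n).mono (ℱ.le n))).aestronglyMeasurable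
    C (by simpa only [Real.norm_eq_abs] using hC n)

/-- At time `1` the drift contains the term `-Z 1`, which bounded jumps can only balance
when `Z 1` is bounded. -/
lemma exists_ae_le_at_one_of_hasSupercriticalDrift [IsFiniteMeasure μ] {C β ρ : ℝ}
    (hC : ∀ n, ∀ᵐ ω ∂μ, |Z (n + 1) ω - Z n ω| ≤ C) (hβ0 : 0 ≤ β)
    (hdrift : HasSupercriticalDrift μ ℱ Z β ρ) : ∃ B, ∀ᵐ ω ∂μ, Z 1 ω ≤ B := by
  obtain ⟨R, hR1, hR⟩ := hdrift (1 / 2) (by norm_num)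
  refine ⟨max R (2 * C + 2 * |ρ| + 1), ?_⟩
  filter_upwards [hR 1 le_rfl, ae_bdd_abs_condExp_of_ae_bdd_abs (m := ℱ 1) (hC 1)]
    with ω hd hE
  by_contra! hgt
  have hZR : R ≤ Z 1 ω := (le_max_left _ _).trans hgt.le
  have hy0 : 0 ≤ Z 1 ω ^ (-β) := rpow_nonneg (by linarith) _
  have hy1 : Z 1 ω ^ (-β) ≤ 1 := rpow_le_one_of_one_le_of_nonpos (hR1.trans hZR) (by linarith)
  have hρy : ρ * Z 1 ω ^ (-β) ≤ |ρ| :=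
    (mul_le_mul_of_nonneg_right (le_abs_self ρ) hy0).trans
      (mul_le_of_le_one_right (abs_nonneg ρ) hy1)
  have hupper := (abs_le.1 (hd hZR)).2
  have hElow := (abs_le.1 hE).1
  simp only [Nat.cast_one, div_one] at hupper
  linarith [(le_max_right R _).trans_lt hgt]

lemma integrable_of_bounded_jumps [IsFiniteMeasure μ]
    (hadapt : ∀ n, StronglyMeasurable[ℱ n] (Z n)) (hpos : ∀ n ω, 0 ≤ Z n ω) {C B : ℝ}
    (hC : ∀ n, ∀ᵐ ω ∂μ, |Z (n + 1) ω - Z n ω| ≤ C) (hB : ∀ᵐ ω ∂μ, Z 1 ω ≤ B) :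
    ∀ n, 1 ≤ n → Integrable (Z n) μ := by
  intro n hn
  induction n, hn using Nat.le_induction with
  | base =>
    exact .of_bound ((hadapt 1).mono (ℱ.le 1)).aestronglyMeasurable B
      (hB.mono fun ω h => by rwa [Real.norm_of_nonneg (hpos 1 ω)])
  | succ n _ ih =>
    exact (ih.add (integrable_increment ℱ hadapt hC n)).congr (ae_of_all _ fun ω => by simp)

lemma measure_forall_ge_of_unbounded_le [IsFiniteMeasure μ]
    (hadapt : ∀ n, StronglyMeasurable[ℱ n] (Z n)) (hpos : ∀ n ω, 0 ≤ Z n ω) {k : ℕ}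
    (hint : ∀ n, k ≤ n → Integrable (Z n) μ) {R : ℝ}
    (hdrift : ∀ j, k ≤ j → ∀ᵐ ω ∂μ, R ≤ Z j ω →
      μ[fun ω => Z (j + 1) ω - Z j ω | ℱ j] ω ≤ 0) {Λ : ℝ} (hΛ : 0 < Λ) :
    μ {ω | (∀ j, k ≤ j → R ≤ Z j ω) ∧ ∀ b : ℝ, ∃ᶠ n in atTop, b < Z n ω}
      ≤ ENNReal.ofReal ((∫ ω, Z k ω ∂μ) / Λ) := by
  set S : ℕ → Set Ω := fun n => Z n ⁻¹' Set.Icc R Λ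
  have hsub : {ω | (∀ j, k ≤ j → R ≤ Z j ω) ∧ ∀ b : ℝ, ∃ᶠ n in atTop, b < Z n ω}
      ⊆ Set.univ ∩ {ω | ∃ t, IsFirstExit S k t ω ∧ Λ ≤ Z t ω} := by
    rintro ω ⟨hR, hb⟩
    obtain ⟨t, hkt, ht⟩ := (hb Λ).forall_exists_of_atTop k
    obtain ⟨u, hu⟩ := exists_isFirstExit (S := S) ⟨t, hkt, fun h => (not_le.2 ht) h.2⟩
    have hout : ¬ (R ≤ Z u ω ∧ Z u ω ≤ Λ) := hu.2.1
    exact ⟨trivial, u, hu, by linarith [not_and.1 hout (hR u hu.1)]⟩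
  refine (measure_mono hsub).trans ?_
  simpa only [Measure.restrict_univ] using measure_inter_firstExit_ge_le ℱ hpos hint
    (fun n => (hadapt n).measurable measurableSet_Icc)
    (fun j hkj => (hdrift j hkj).mono fun ω h hω => h (mem_stayIn.1 hω j hkj le_rfl).1)
    MeasurableSet.univ hΛ

lemma ae_frequently_lt_of_condExp_increment_nonpos [IsFiniteMeasure μ]
    (hadapt : ∀ n, StronglyMeasurable[ℱ n] (Z n)) (hpos : ∀ n ω, 0 ≤ Z n ω)
    (hint : ∀ n, 1 ≤ n → Integrable (Z n) μ)
    (hunb : ∀ᵐ ω ∂μ, ∀ b : ℝ, ∃ᶠ n in atTop, b < Z n ω) {R : ℝ}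
    (hdrift : ∀ j, 1 ≤ j → ∀ᵐ ω ∂μ, R ≤ Z j ω →
      μ[fun ω => Z (j + 1) ω - Z j ω | ℱ j] ω ≤ 0) :
    ∀ᵐ ω ∂μ, ∃ᶠ n in atTop, Z n ω < R := by
  have hnull : ∀ k, 1 ≤ k →
      μ {ω | (∀ j, k ≤ j → R ≤ Z j ω) ∧ ∀ b : ℝ, ∃ᶠ n in atTop, b < Z n ω} = 0 := by
    intro k hk
    have htend : Tendsto (fun Λ : ℕ => ENNReal.ofReal ((∫ ω, Z k ω ∂μ) / Λ)) atTop (𝓝 0) := by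
      simpa using ENNReal.tendsto_ofReal (tendsto_const_div_atTop_nhds_zero_nat _)
    refine le_antisymm (ge_of_tendsto htend (eventually_atTop.2 ⟨1, fun Λ hΛ => ?_⟩)) bot_le
    exact measure_forall_ge_of_unbounded_le ℱ hadapt hpos (fun n hn => hint n (hk.trans hn))
      (fun j hj => hdrift j (hk.trans hj)) (Nat.cast_pos.2 hΛ)
  have hall : ∀ᵐ ω ∂μ, ∀ k, ¬ ((∀ j, k + 1 ≤ j → R ≤ Z j ω) ∧ ∀ b : ℝ, ∃ᶠ n in atTop, b < Z n ω) :=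
    ae_all_iff.2 fun k => measure_eq_zero_iff_ae_notMem.1 (hnull (k + 1) (by omega))
  filter_upwards [hunb, hall] with ω hb hω
  by_contra hfreq
  obtain ⟨k, hk⟩ := eventually_atTop.1 (not_frequently.1 hfreq)
  exact hω k ⟨fun j hj => not_lt.1 (hk j (by omega)), hb⟩

noncomputable def invLyapunov (Z : ℕ → Ω → ℝ) (r : ℝ) (a : ℕ → ℝ) (n : ℕ) (ω : Ω) : ℝ :=
  (max (Z n ω) r)⁻¹ + a n

lemma invLyapunov_nonneg {r : ℝ} (hr : 0 < r) {a : ℕ → ℝ} (ha : ∀ n, 0 ≤ a n) (n : ℕ) (ω : Ω) :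
    0 ≤ invLyapunov Z r a n ω :=
  add_nonneg (inv_nonneg.2 (hr.le.trans (le_max_right _ _))) (ha n)

lemma integrable_invLyapunov [IsFiniteMeasure μ] (hadapt : ∀ n, StronglyMeasurable[ℱ n] (Z n))
    {r : ℝ} (hr : 0 < r) (a : ℕ → ℝ) (n : ℕ) : Integrable (invLyapunov Z r a n) μ := by
  refine .of_bound ((((hadapt n).mono (ℱ.le n)).measurable.max measurable_const).inv.add_const
    (a n)).aestronglyMeasurable (r⁻¹ + |a n|) (ae_of_all _ fun ω => ?_)
  have hmax : 0 < max (Z n ω) r := hr.trans_le (le_max_right _ _)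
  calc ‖invLyapunov Z r a n ω‖ ≤ ‖(max (Z n ω) r)⁻¹‖ + ‖a n‖ := norm_add_le _ _
    _ ≤ r⁻¹ + |a n| := by
      rw [Real.norm_of_nonneg (inv_nonneg.2 hmax.le), Real.norm_eq_abs]
      gcongr
      exact le_max_right _ _

lemma invLyapunov_succ_sub_le {C r : ℝ} (hr : 0 < r) (hrC : 2 * C ≤ r) (a : ℕ → ℝ) {j : ℕ}
    {ω : Ω} (hZ : r ≤ Z j ω) (hδ : |Z (j + 1) ω - Z j ω| ≤ C) :
    invLyapunov Z r a (j + 1) ω - invLyapunov Z r a j ω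
      ≤ -(Z j ω)⁻¹ ^ 2 * (Z (j + 1) ω - Z j ω)
        + (2 * C ^ 2 * (Z j ω)⁻¹ ^ 3 + (a (j + 1) - a j)) := by
  have hx : 0 < Z j ω := hr.trans_le hZ
  have hnext : 0 < Z (j + 1) ω := by linarith [(abs_le.1 hδ).1, (abs_nonneg _).trans hδ]
  have htaylor := inv_add_le_of_abs_le hx (hrC.trans hZ) hδ
  rw [add_sub_cancel] at htaylor
  have hcap : (max (Z (j + 1) ω) r)⁻¹ ≤ (Z (j + 1) ω)⁻¹ := inv_anti₀ hnext (le_max_left _ _)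
  simp only [invLyapunov, max_eq_left hZ]
  linarith

lemma condExp_invLyapunov_increment_nonpos [IsFiniteMeasure μ]
    (hadapt : ∀ n, StronglyMeasurable[ℱ n] (Z n)) {C r β ρ : ℝ} (hr : 0 < r) (hrC : 2 * C ≤ r)
    (hC : ∀ n, ∀ᵐ ω ∂μ, |Z (n + 1) ω - Z n ω| ≤ C) {a : ℕ → ℝ} {j : ℕ}
    (hlow : ∀ᵐ ω ∂μ, r ≤ Z j ω → ρ / 2 * Z j ω ^ (-β) - 3 / 2 * (Z j ω / j)
      ≤ μ[fun ω => Z (j + 1) ω - Z j ω | ℱ j] ω)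
    (ha : ∀ x, r ≤ x → invIncrementBound C β ρ x j + (a (j + 1) - a j) ≤ 0) :
    ∀ᵐ ω ∂μ, r ≤ Z j ω →
      μ[fun ω => invLyapunov Z r a (j + 1) ω - invLyapunov Z r a j ω | ℱ j] ω ≤ 0 := by
  set Y : Ω → ℝ := fun ω => (max (Z j ω) r)⁻¹
  have hYm : StronglyMeasurable[ℱ j] Y :=
    ((hadapt j).measurable.max measurable_const).inv.stronglyMeasurable
  have hYpow : ∀ (p : ℕ) ω, ‖Y ω ^ p‖ ≤ r⁻¹ ^ p := fun p ω => by
    have hmax : 0 < max (Z j ω) r := hr.trans_le (le_max_right _ _)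
    rw [Real.norm_of_nonneg (by positivity)]
    exact pow_le_pow_left₀ (by positivity) (inv_anti₀ hr (le_max_right _ _)) p
  have hYint : Integrable (fun ω => Y ω ^ 3) μ :=
    .of_bound ((hYm.pow 3).mono (ℱ.le j)).aestronglyMeasurable _ (ae_of_all _ (hYpow 3))
  have hkey := ae_condExp_le_mul_condExp_add (ℱ.le j)
    ((hadapt j).measurable measurableSet_Ici : MeasurableSet[ℱ j] {ω | r ≤ Z j ω})
    (X := fun ω => invLyapunov Z r a (j + 1) ω - invLyapunov Z r a j ω)
    (g := fun ω => -Y ω ^ 2) (h := fun ω => 2 * C ^ 2 * Y ω ^ 3 + (a (j + 1) - a j))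
    ((integrable_invLyapunov ℱ hadapt hr a _).sub (integrable_invLyapunov ℱ hadapt hr a _))
    (integrable_increment ℱ hadapt hC j) (hYm.pow 2).neg
    (fun ω => (norm_neg _).le.trans (hYpow 2 ω))
    ((hYm.pow 3).const_mul _ |>.add_const _) ((hYint.const_mul _).add (integrable_const _)) (by
      filter_upwards [hC j] with ω hδ (hω : r ≤ Z j ω)
      simpa only [Y, max_eq_left hω] using invLyapunov_succ_sub_le hr hrC a hω hδ)
  filter_upwards [hkey, hlow] with ω hkeyω hlowω hω
  have hY : Y ω = (Z j ω)⁻¹ := by simp only [Y, max_eq_left hω]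
  have hL : (Z j ω)⁻¹ ^ 2 * (ρ / 2 * Z j ω ^ (-β) - 3 / 2 * (Z j ω / j))
      ≤ (Z j ω)⁻¹ ^ 2 * μ[fun ω => Z (j + 1) ω - Z j ω | ℱ j] ω :=
    mul_le_mul_of_nonneg_left (hlowω hω) (by positivity)
  rw [hY] at hkeyω
  have hbound := ha _ hω
  unfold invIncrementBound at hbound
  linarith [hkeyω hω]

lemma measure_inter_frequently_lt_le [IsFiniteMeasure μ]
    (hadapt : ∀ n, StronglyMeasurable[ℱ n] (Z n)) {r : ℝ} (hr : 0 < r) {a : ℕ → ℝ}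
    (ha0 : ∀ n, 0 ≤ a n) {t : ℕ}
    (hdrift : ∀ j, t ≤ j → ∀ᵐ ω ∂μ, r ≤ Z j ω →
      μ[fun ω => invLyapunov Z r a (j + 1) ω - invLyapunov Z r a j ω | ℱ j] ω ≤ 0)
    {s : Set Ω} (hs : MeasurableSet[ℱ t] s) {b : ℝ} (hb : ∀ ω ∈ s, invLyapunov Z r a t ω ≤ b) :
    μ (s ∩ {ω | ∃ᶠ n in atTop, Z n ω < r}) ≤ ENNReal.ofReal (r * b) * μ s := by
  set F := invLyapunov Z r a
  set S : ℕ → Set Ω := fun n => {ω | r ≤ Z n ω}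
  have hsub : s ∩ {ω | ∃ᶠ n in atTop, Z n ω < r}
      ⊆ s ∩ {ω | ∃ u, IsFirstExit S t u ω ∧ r⁻¹ ≤ F u ω} := by
    rintro ω ⟨hωs, hω⟩
    obtain ⟨u, htu, hu⟩ := hω.forall_exists_of_atTop t
    obtain ⟨v, hv⟩ := exists_isFirstExit (S := S) ⟨u, htu, not_le.2 hu⟩
    have hlt : Z v ω < r := not_le.1 hv.2.1
    refine ⟨hωs, v, hv, ?_⟩
    simp only [F, invLyapunov, max_eq_right hlt.le]
    linarith [ha0 v]
  have hexit := measure_inter_firstExit_ge_le ℱ (invLyapunov_nonneg hr ha0)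
    (fun n _ => integrable_invLyapunov ℱ hadapt hr a n)
    (fun n => (hadapt n).measurable measurableSet_Ici)
    (fun j htj => (hdrift j htj).mono fun ω h hω => h (mem_stayIn.1 hω j htj le_rfl))
    hs (inv_pos.2 hr)
  have hstart : ∫ ω in s, F t ω ∂μ ≤ b * μ.real s :=
    (setIntegral_mono_on (integrable_invLyapunov ℱ hadapt hr a t).integrableOn
      (integrable_const b).integrableOn (ℱ.le t _ hs) hb).trans_eq
      (by rw [setIntegral_const, smul_eq_mul, mul_comm])
  calc μ (s ∩ {ω | ∃ᶠ n in atTop, Z n ω < r})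
      ≤ ENNReal.ofReal ((∫ ω in s, F t ω ∂μ) / r⁻¹) := (measure_mono hsub).trans hexit
    _ ≤ ENNReal.ofReal (r * b * μ.real s) := by
      refine ENNReal.ofReal_le_ofReal ?_
      rw [div_inv_eq_mul]
      nlinarith
    _ = ENNReal.ofReal (r * b) * μ s := by
      rw [ENNReal.ofReal_mul' measureReal_nonneg, measureReal_def,
        ENNReal.ofReal_toReal (measure_ne_top _ _)]

lemma measure_frequently_lt_le [IsProbabilityMeasure μ]
    (hadapt : ∀ n, StronglyMeasurable[ℱ n] (Z n))
    (hunb : ∀ᵐ ω ∂μ, ∀ b : ℝ, ∃ᶠ n in atTop, b < Z n ω) {r : ℝ} (hr : 0 < r) {a : ℕ → ℝ}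
    (ha0 : ∀ n, 0 ≤ a n) (hanti : AntitoneOn a (Set.Ici 1))
    (hdrift : ∀ j, 1 ≤ j → ∀ᵐ ω ∂μ, r ≤ Z j ω →
      μ[fun ω => invLyapunov Z r a (j + 1) ω - invLyapunov Z r a j ω | ℱ j] ω ≤ 0)
    {M : ℝ} (hrM : r ≤ M) {n₀ : ℕ} (hn₀ : 1 ≤ n₀) :
    μ {ω | ∃ᶠ n in atTop, Z n ω < r} ≤ ENNReal.ofReal (r * (M⁻¹ + a n₀)) := by
  -- split according to the first time after `n₀` at which `Z` reaches `M`
  set T : ℕ → Set Ω := fun t => {ω | IsFirstExit (fun n => {ω | Z n ω < M}) n₀ t ω}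
  have hT : ∀ t, MeasurableSet[ℱ t] (T t) := measurableSet_isFirstExit ℱ
    (fun n => (hadapt n).measurable measurableSet_Iio) n₀
  refine measure_le_of_forall_inter_le (fun t => ℱ.le t _ (hT t))
    (fun t t' htt' => Set.disjoint_left.2 fun ω h h' =>
      htt' (IsFirstExit.unique (S := fun n => {ω | Z n ω < M}) h h')) ?_
    fun t => ?_
  · filter_upwards [hunb] with ω hω
    obtain ⟨t, hn₀t, ht⟩ := (hω M).forall_exists_of_atTop n₀
    exact exists_isFirstExit ⟨t, hn₀t, not_lt.2 ht.le⟩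
  rcases lt_or_ge t n₀ with htn | hnt
  · have hempty : T t = ∅ := Set.eq_empty_of_forall_notMem fun ω h => absurd h.1 (not_le.2 htn)
    simp [hempty]
  refine measure_inter_frequently_lt_le ℱ hadapt hr ha0
    (fun j htj => hdrift j (hn₀.trans (hnt.trans htj))) (hT t) fun ω hω => ?_
  have hinv : (max (Z t ω) r)⁻¹ ≤ M⁻¹ :=
    inv_anti₀ (hr.trans_le hrM) ((not_lt.1 hω.2.1).trans (le_max_left _ _))
  have hdecay := hanti (Set.mem_Ici.2 hn₀) (Set.mem_Ici.2 (hn₀.trans hnt)) hnt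
  simp only [invLyapunov]
  linarith

lemma ae_eventually_ge_of_invLyapunov [IsProbabilityMeasure μ]
    (hadapt : ∀ n, StronglyMeasurable[ℱ n] (Z n))
    (hunb : ∀ᵐ ω ∂μ, ∀ b : ℝ, ∃ᶠ n in atTop, b < Z n ω) {r : ℝ} (hr : 0 < r) {a : ℕ → ℝ}
    (ha0 : ∀ n, 0 ≤ a n) (hanti : AntitoneOn a (Set.Ici 1)) (hatend : Tendsto a atTop (𝓝 0))
    (hdrift : ∀ j, 1 ≤ j → ∀ᵐ ω ∂μ, r ≤ Z j ω →
      μ[fun ω => invLyapunov Z r a (j + 1) ω - invLyapunov Z r a j ω | ℱ j] ω ≤ 0) :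
    ∀ᵐ ω ∂μ, ∀ᶠ n in atTop, r ≤ Z n ω := by
  have hbound : ∀ n : ℕ, max r 1 ≤ n →
      μ {ω | ∃ᶠ n in atTop, Z n ω < r} ≤ ENNReal.ofReal (r * ((n : ℝ)⁻¹ + a n)) := fun n hn =>
    measure_frequently_lt_le ℱ hadapt hunb hr ha0 hanti hdrift ((le_max_left _ _).trans hn)
      (by exact_mod_cast (le_max_right _ _).trans hn)
  have htend : Tendsto (fun n : ℕ => ENNReal.ofReal (r * ((n : ℝ)⁻¹ + a n))) atTop (𝓝 0) := by
    simpa using ENNReal.tendsto_ofReal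
      ((tendsto_inv_atTop_nhds_zero_nat.add hatend).const_mul r)
  have hnull : μ {ω | ∃ᶠ n in atTop, Z n ω < r} = 0 :=
    le_antisymm (ge_of_tendsto htend
      ((tendsto_natCast_atTop_atTop.eventually_ge_atTop (max r 1)).mono hbound)) bot_le
  filter_upwards [measure_eq_zero_iff_ae_notMem.1 hnull] with ω hω
  simpa only [Set.mem_ofPred_eq, not_frequently, not_lt] using hω

lemma ae_tendsto_atTop_of_hasSupercriticalDrift [IsProbabilityMeasure μ]
    (hadapt : ∀ n, StronglyMeasurable[ℱ n] (Z n)) {C : ℝ}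
    (hC : ∀ n, ∀ᵐ ω ∂μ, |Z (n + 1) ω - Z n ω| ≤ C)
    (hunb : ∀ᵐ ω ∂μ, ∀ b : ℝ, ∃ᶠ n in atTop, b < Z n ω) {β ρ : ℝ} (hβ0 : 0 ≤ β) (hβ1 : β < 1)
    (hρ : 0 < ρ) (hdrift : HasSupercriticalDrift μ ℱ Z β ρ) :
    ∀ᵐ ω ∂μ, Tendsto (fun n => Z n ω) atTop atTop := by
  obtain ⟨R, hR1, hR⟩ := hdrift (min (ρ / 2) (1 / 2)) (by positivity)
  have hlow : ∀ j, 1 ≤ j → ∀ᵐ ω ∂μ, R ≤ Z j ω →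
      ρ / 2 * Z j ω ^ (-β) - 3 / 2 * (Z j ω / j)
        ≤ μ[fun ω => Z (j + 1) ω - Z j ω | ℱ j] ω := by
    intro j hj
    filter_upwards [hR j hj] with ω h hRZ
    have hZ : 0 ≤ Z j ω := by linarith
    have hy : 0 ≤ Z j ω ^ (-β) := rpow_nonneg hZ _
    have hq : 0 ≤ Z j ω / j := div_nonneg hZ (Nat.cast_nonneg j)
    have hlower := (abs_le.1 (h hRZ)).1
    rw [mul_div_assoc] at hlower
    nlinarith [mul_le_mul_of_nonneg_right (min_le_left (ρ / 2) (1 / 2)) hy,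
      mul_le_mul_of_nonneg_right (min_le_right (ρ / 2) (1 / 2)) hq]
  obtain ⟨x₀, a, ha0, hanti, hatend, ha⟩ := exists_compensator C hβ0 hβ1 hρ
  set r₀ := max (max x₀ R) (2 * C)
  have hlevel : ∀ n : ℕ, ∀ᵐ ω ∂μ, ∀ᶠ k in atTop, r₀ + n ≤ Z k ω := by
    intro n
    have hr₀ : x₀ ≤ r₀ ∧ R ≤ r₀ ∧ 2 * C ≤ r₀ :=
      ⟨(le_max_left _ _).trans (le_max_left _ _), (le_max_right _ _).trans (le_max_left _ _),
        le_max_right _ _⟩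
    have hn : (0 : ℝ) ≤ n := Nat.cast_nonneg n
    refine ae_eventually_ge_of_invLyapunov ℱ hadapt hunb (by linarith) ha0 hanti hatend
      fun j hj => condExp_invLyapunov_increment_nonpos ℱ hadapt (by linarith) (by linarith) hC
        ((hlow j hj).mono fun ω h hZ => h (by linarith)) fun x hx => ha x (by linarith) j hj
  filter_upwards [ae_all_iff.2 hlevel] with ω hω
  refine tendsto_atTop.2 fun b => ?_
  obtain ⟨n, hn⟩ := exists_nat_ge (b - r₀)
  exact (hω n).mono fun k hk => by linarith

lemma ae_frequently_lt_of_hasSupercriticalDrift [IsProbabilityMeasure μ]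
    (hadapt : ∀ n, StronglyMeasurable[ℱ n] (Z n)) (hpos : ∀ n ω, 0 ≤ Z n ω) {C : ℝ}
    (hC : ∀ n, ∀ᵐ ω ∂μ, |Z (n + 1) ω - Z n ω| ≤ C)
    (hunb : ∀ᵐ ω ∂μ, ∀ b : ℝ, ∃ᶠ n in atTop, b < Z n ω) {β ρ : ℝ} (hβ0 : 0 ≤ β)
    (hρ : ρ < 0) (hdrift : HasSupercriticalDrift μ ℱ Z β ρ) :
    ∃ R, ∀ᵐ ω ∂μ, ∃ᶠ n in atTop, Z n ω < R := by
  obtain ⟨B, hB⟩ := exists_ae_le_at_one_of_hasSupercriticalDrift ℱ hC hβ0 hdrift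
  obtain ⟨R, -, hR⟩ := hdrift (min 1 (-ρ)) (lt_min one_pos (neg_pos.2 hρ))
  refine ⟨R, ae_frequently_lt_of_condExp_increment_nonpos ℱ hadapt hpos
    (integrable_of_bounded_jumps ℱ hadapt hpos hC hB) hunb fun j hj => ?_⟩
  filter_upwards [hR j hj] with ω h hRZ
  have hy : 0 ≤ Z j ω ^ (-β) := rpow_nonneg (hpos j ω) _
  have hq : 0 ≤ Z j ω / j := div_nonneg (hpos j ω) (Nat.cast_nonneg j)
  have hupper := (abs_le.1 (h hRZ)).2
  rw [mul_div_assoc] at hupper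
  nlinarith [mul_le_mul_of_nonneg_right (min_le_left 1 (-ρ)) hq,
    mul_le_mul_of_nonneg_right (min_le_right 1 (-ρ)) hy]

end Supercritical

theorem supercritical_classification_general
    {Ω : Type*} {m0 : MeasurableSpace Ω} {μ : Measure Ω} [IsProbabilityMeasure μ]
    (ℱ : MeasureTheory.Filtration ℕ m0)
    (Z : ℕ → Ω → ℝ)
    (hadapt : ∀ n, StronglyMeasurable[ℱ n] (Z n))
    (hpos : ∀ n ω, 0 ≤ Z n ω)
    (hjumps : ∃ C : ℝ, ∀ n, ∀ᵐ ω ∂μ, |Z (n + 1) ω - Z n ω| ≤ C)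
    (hlimsup : ∀ᵐ ω ∂μ, Filter.limsup (fun n => ENNReal.ofReal (Z n ω)) Filter.atTop = ⊤)
    (β ρ : ℝ) (hβ0 : 0 ≤ β) (hβ1 : β < 1)
    (hdrift : ∀ ε : ℝ, 0 < ε → ∃ R : ℝ, 1 ≤ R ∧ ∀ n, 1 ≤ n → ∀ᵐ ω ∂μ, R ≤ Z n ω →
      |(μ[(fun ω' => Z (n + 1) ω' - Z n ω') | ℱ n]) ω - ρ * Z n ω ^ (-β) + Z n ω / n|
        ≤ ε * Z n ω ^ (-β) + ε * Z n ω / n)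
 :
    (0 < ρ →
      ∀ᵐ ω ∂μ, Filter.Tendsto (fun n => Z n ω) Filter.atTop Filter.atTop) ∧
    (ρ < 0 →
      ∀ᵐ ω ∂μ, Filter.liminf (fun n => ENNReal.ofReal (Z n ω)) Filter.atTop < ⊤) := by
  obtain ⟨C, hC⟩ := hjumps
  have hunb : ∀ᵐ ω ∂μ, ∀ b : ℝ, ∃ᶠ n in atTop, b < Z n ω :=
    hlimsup.mono fun ω h => frequently_lt_of_limsup_ofReal_eq_top h
  refine ⟨fun hρ => ae_tendsto_atTop_of_hasSupercriticalDrift ℱ hadapt hC hunb hβ0 hβ1 hρ hdrift,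
    fun hρ => ?_⟩
  obtain ⟨R, hR⟩ := ae_frequently_lt_of_hasSupercriticalDrift ℱ hadapt hpos hC hunb hβ0 hρ hdrift
  filter_upwards [hR] with ω hω
  exact (liminf_le_of_frequently_le (hω.mono fun n hn => ENNReal.ofReal_le_ofReal hn.le)
    (by isBoundedDefault)).trans_lt ENNReal.ofReal_lt_top

/-- Supercritical case: drift ρ x^{−β} − x/n with β ∈ [0,1), ρ ≠ 0. Transient if
ρ > 0, recurrent if ρ < 0. -/
theorem supercritical_classification
    {Ω : Type*} {m0 : MeasurableSpace Ω} {μ : Measure Ω} [IsProbabilityMeasure μ]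
    (ℱ : MeasureTheory.Filtration ℕ m0)
    (Z : ℕ → Ω → ℝ)
    (hadapt : ∀ n, StronglyMeasurable[ℱ n] (Z n))
    (hpos : ∀ n ω, 0 ≤ Z n ω)
    (hjumps : ∃ C : ℝ, ∀ n, ∀ᵐ ω ∂μ, |Z (n + 1) ω - Z n ω| ≤ C)
    (hlimsup : ∀ᵐ ω ∂μ, Filter.limsup (fun n => ENNReal.ofReal (Z n ω)) Filter.atTop = ⊤)
    (β ρ : ℝ) (hβ0 : 0 ≤ β) (hβ1 : β < 1) (hρ : ρ ≠ 0)
    (hdrift : ∀ ε : ℝ, 0 < ε → ∃ R : ℝ, 1 ≤ R ∧ ∀ n, 1 ≤ n → ∀ᵐ ω ∂μ, R ≤ Z n ω →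
      |(μ[(fun ω' => Z (n + 1) ω' - Z n ω') | ℱ n]) ω - ρ * Z n ω ^ (-β) + Z n ω / n|
        ≤ ε * Z n ω ^ (-β) + ε * Z n ω / n)
 :
    (0 < ρ →
      ∀ᵐ ω ∂μ, Filter.Tendsto (fun n => Z n ω) Filter.atTop Filter.atTop) ∧
    (ρ < 0 →
      ∀ᵐ ω ∂μ, Filter.liminf (fun n => ENNReal.ofReal (Z n ω)) Filter.atTop < ⊤) :=
  supercritical_classification_general ℱ Z hadapt hpos hjumps hlimsup β ρ hβ0 hβ1 hdrift
end

section
/- Let (Z_n)_{n≥1} be adapted, [0,∞)-valued, with bounded jumps. Suppose there exist β ∈ [0,1) and A > 0 such that for some R ≥ 1 and N, for all n ≥ N, almost surely on {Z_n ≥ R}: Z_n^β · E_n[Z_{n+1} − Z_n] ≤ −A. Then for any ε > 0, almost surely Z_n ≤ (log n)^{1/(1−β) + ε} for all but finitely many n. -/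
open MeasureTheory Filter Real
open scoped ENNReal Topology

/-!
Put `γ = 1 - β` and `V z = exp (c * z ^ γ)`. For small `c > 0` one has
`E_n[V (Z (n+1))] ≤ V (Z n) + K` for `n ≥ N`: above a threshold, a second-order expansion of `V`
shows that the conditional drift of `Z_n ^ γ`, at most `-γ A Z_n ^ (-2β)`, beats the quadratic
term, of order `c (C Z_n ^ (-β))²`; below the threshold the bounded jumps bound `V (Z (n+1))` by a
constant. Hence `E[V (Z n)]` grows at most linearly, Markov's inequality at the level
`(log n) ^ (1/γ + ε)` gives a probability at most `n² / exp (c (log n) ^ (1 + εγ)) ≤ n⁻²`, and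
Borel–Cantelli concludes. Integrability comes from working on the `ℱ 0`-events `{Z 0 ≤ M}` first.
-/

theorem rpow_sub_rpow_le_mul_sub {γ a b : ℝ} (hγ0 : 0 ≤ γ) (hγ1 : γ ≤ 1) (ha : 0 < a)
    (hb : 0 ≤ b) : b ^ γ - a ^ γ ≤ γ * a ^ (γ - 1) * (b - a) := by
  have hs : -1 ≤ (b - a) / a := by
    rw [le_div_iff₀ ha]; linarith
  have hb_eq : b = a * (1 + (b - a) / a) := by field_simp; ring
  have hbern := rpow_one_add_le_one_add_mul_self hs hγ0 hγ1
  calc b ^ γ - a ^ γ = a ^ γ * (1 + (b - a) / a) ^ γ - a ^ γ := by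
        rw [← mul_rpow ha.le (by linarith), ← hb_eq]
    _ ≤ a ^ γ * (1 + γ * ((b - a) / a)) - a ^ γ := by gcongr
    _ = γ * (a ^ γ / a) * (b - a) := by field_simp; ring
    _ = γ * a ^ (γ - 1) * (b - a) := by rw [rpow_sub_one ha.ne']

theorem abs_rpow_add_sub_rpow_le {γ z d C : ℝ} (hγ0 : 0 ≤ γ) (hγ1 : γ ≤ 1) (hz : 0 < z)
    (hzC : 2 * C ≤ z) (hd : |d| ≤ C) : |(z + d) ^ γ - z ^ γ| ≤ 2 * C * z ^ (γ - 1) := by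
  obtain ⟨hd₁, hd₂⟩ := abs_le.1 hd
  have hzd : z / 2 ≤ z + d := by linarith
  have hpos : 0 < z ^ (γ - 1) := rpow_pos_of_pos hz _
  have hslope : (z + d) ^ (γ - 1) ≤ 2 * z ^ (γ - 1) := by
    have h2 : (2 : ℝ)⁻¹ ≤ 2 ^ (γ - 1) := by
      rw [← rpow_neg_one]; exact rpow_le_rpow_of_exponent_le (by norm_num) (by linarith)
    calc (z + d) ^ (γ - 1) ≤ (z / 2) ^ (γ - 1) :=
          rpow_le_rpow_of_nonpos (by positivity) hzd (by linarith)
      _ = z ^ (γ - 1) / 2 ^ (γ - 1) := div_rpow hz.le zero_le_two _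
      _ ≤ 2 * z ^ (γ - 1) := by
          rw [div_le_iff₀ (by positivity)]; nlinarith
  have hup := rpow_sub_rpow_le_mul_sub hγ0 hγ1 hz (b := z + d) (by linarith)
  have hlow := rpow_sub_rpow_le_mul_sub hγ0 hγ1 (by linarith : 0 < z + d) hz.le
  have hC : 0 ≤ C := (abs_nonneg d).trans hd
  have h0 : 0 ≤ (z + d) ^ (γ - 1) := rpow_nonneg (by linarith) _
  rw [abs_le]
  constructor
  · have : γ * (z + d) ^ (γ - 1) * (z - (z + d)) ≤ 2 * C * z ^ (γ - 1) :=
      calc γ * (z + d) ^ (γ - 1) * (z - (z + d)) ≤ γ * (z + d) ^ (γ - 1) * C :=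
            mul_le_mul_of_nonneg_left (by linarith) (mul_nonneg hγ0 h0)
        _ ≤ (z + d) ^ (γ - 1) * C := by nlinarith [mul_nonneg h0 hC]
        _ ≤ 2 * z ^ (γ - 1) * C := mul_le_mul_of_nonneg_right hslope hC
        _ = 2 * C * z ^ (γ - 1) := by ring
    linarith
  · have : γ * z ^ (γ - 1) * (z + d - z) ≤ 2 * C * z ^ (γ - 1) :=
      calc γ * z ^ (γ - 1) * (z + d - z) ≤ γ * z ^ (γ - 1) * C :=
            mul_le_mul_of_nonneg_left (by linarith) (mul_nonneg hγ0 hpos.le)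
        _ ≤ 2 * C * z ^ (γ - 1) := by nlinarith [mul_nonneg hpos.le hC]
    linarith

theorem exp_mul_rpow_add_le {β c C z d : ℝ} (hβ0 : 0 ≤ β) (hβ1 : β ≤ 1) (hc : 0 ≤ c)
    (hcC : 2 * C * c ≤ 1) (hz1 : 1 ≤ z) (hzC : 2 * C ≤ z) (hd : |d| ≤ C) :
    exp (c * (z + d) ^ (1 - β)) ≤
      (1 + (2 * C * c * z ^ (-β)) ^ 2 + c * (1 - β) * z ^ (-β) * d) * exp (c * z ^ (1 - β)) := by
  have hz : 0 < z := by linarith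
  have hexp : 1 - β - 1 = -β := by ring
  have hy0 : 0 < z ^ (-β) := rpow_pos_of_pos hz _
  have hy1 : z ^ (-β) ≤ 1 := rpow_le_one_of_one_le_of_nonpos hz1 (by linarith)
  have hC : 0 ≤ C := (abs_nonneg d).trans hd
  set Δ := (z + d) ^ (1 - β) - z ^ (1 - β)
  have hΔ : Δ ≤ (1 - β) * z ^ (-β) * d := by
    have := rpow_sub_rpow_le_mul_sub (γ := 1 - β) (by linarith) (by linarith) hz (b := z + d)
      (by linarith [abs_le.1 hd])
    rwa [hexp, add_sub_cancel_left] at this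
  have hcΔ : |c * Δ| ≤ 2 * C * c * z ^ (-β) := by
    have := abs_rpow_add_sub_rpow_le (γ := 1 - β) (by linarith) (by linarith) hz hzC hd
    rw [hexp] at this
    rw [abs_mul, abs_of_nonneg hc]
    nlinarith
  have hcΔ1 : |c * Δ| ≤ 1 := hcΔ.trans (by nlinarith [mul_nonneg hC hc])
  have hquad : exp (c * Δ) ≤ 1 + c * Δ + (c * Δ) ^ 2 := by
    linarith [(abs_le.1 (abs_exp_sub_one_sub_id_le hcΔ1)).2]
  have hsq : (c * Δ) ^ 2 ≤ (2 * C * c * z ^ (-β)) ^ 2 :=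
    sq_le_sq' (abs_le.1 hcΔ).1 (abs_le.1 hcΔ).2
  calc exp (c * (z + d) ^ (1 - β)) = exp (c * Δ) * exp (c * z ^ (1 - β)) := by
        rw [← exp_add]; congr 1; ring
    _ ≤ _ := by
      gcongr
      nlinarith

/-- Above `R`, `lyapunovOffset x + lyapunovSlope x * (y - x)` is the second-order Taylor bound
for `exp (c * y ^ (1 - β))` around `x`; below `R` it is the crude bound
`exp (c * (R + C) ^ (1 - β))`. -/
noncomputable def lyapunovSlope (β c R x : ℝ) : ℝ :=
  if R ≤ x then c * (1 - β) * x ^ (-β) * exp (c * x ^ (1 - β)) else 0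

noncomputable def lyapunovOffset (β c C R x : ℝ) : ℝ :=
  if R ≤ x then (1 + (2 * C * c * x ^ (-β)) ^ 2) * exp (c * x ^ (1 - β))
  else exp (c * (R + C) ^ (1 - β))

section Lyapunov

variable {β c C R : ℝ}

theorem measurable_lyapunovSlope : Measurable (lyapunovSlope β c R) :=
  Measurable.ite measurableSet_Ici (by fun_prop) (by fun_prop)

theorem measurable_lyapunovOffset : Measurable (lyapunovOffset β c C R) :=
  Measurable.ite measurableSet_Ici (by fun_prop) (by fun_prop)

theorem exp_le_lyapunovOffset_add (hβ0 : 0 ≤ β) (hβ1 : β ≤ 1) (hR1 : 1 ≤ R) (hRC : 2 * C ≤ R)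
    (hc : 0 ≤ c) (hcC : 2 * C * c ≤ 1) {x y : ℝ} (hy : 0 ≤ y) (hxy : |y - x| ≤ C) :
    exp (c * y ^ (1 - β)) ≤ lyapunovOffset β c C R x + lyapunovSlope β c R x * (y - x) := by
  unfold lyapunovOffset lyapunovSlope
  split_ifs with hx
  · have := exp_mul_rpow_add_le hβ0 hβ1 hc hcC (hR1.trans hx) (hRC.trans hx) hxy
    rw [add_sub_cancel] at this
    linarith
  · have hyR : y ≤ R + C := by linarith [(abs_le.1 hxy).2]
    rw [zero_mul, add_zero]
    gcongr

theorem lyapunovOffset_add_le {A : ℝ} (hβ1 : β ≤ 1) (hR1 : 1 ≤ R) (hc : 0 ≤ c)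
    (hcA : c * (2 * C) ^ 2 ≤ (1 - β) * A) {x D : ℝ} (hD : R ≤ x → x ^ β * D ≤ -A) :
    lyapunovOffset β c C R x + lyapunovSlope β c R x * D ≤
      exp (c * x ^ (1 - β)) + exp (c * (R + C) ^ (1 - β)) := by
  unfold lyapunovOffset lyapunovSlope
  split_ifs with hx
  · have hx0 : 0 < x := by linarith
    have hy : x ^ (-β) * x ^ β = 1 := by
      rw [rpow_neg hx0.le, inv_mul_cancel₀ (rpow_pos_of_pos hx0 _).ne']
    set y := x ^ (-β)
    -- the drift `x ^ β * D ≤ -A` pays for the quadratic term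
    have hyD : y * D ≤ -A * y ^ 2 := by
      have := mul_le_mul_of_nonneg_left (hD hx) (sq_nonneg y)
      calc y * D = y ^ 2 * (x ^ β * D) := by linear_combination (-(y * D)) * hy
        _ ≤ _ := by linarith
    have hneg : (2 * C * c * y) ^ 2 + c * (1 - β) * y * D ≤ 0 := by
      have h1 := mul_le_mul_of_nonneg_left hyD (mul_nonneg hc (by linarith : (0:ℝ) ≤ 1 - β))
      have h2 := mul_le_mul_of_nonneg_left hcA (mul_nonneg hc (sq_nonneg y))
      nlinarith
    nlinarith [exp_pos (c * x ^ (1 - β)), exp_pos (c * (R + C) ^ (1 - β))]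
  · rw [zero_mul, add_zero]
    linarith [exp_pos (c * x ^ (1 - β))]

theorem abs_lyapunovOffset_le (hβ0 : 0 ≤ β) (hR1 : 1 ≤ R) (hC : 0 ≤ C) (hc : 0 ≤ c)
    (hcC : 2 * C * c ≤ 1) (x : ℝ) :
    |lyapunovOffset β c C R x| ≤ 2 * exp (c * x ^ (1 - β)) + exp (c * (R + C) ^ (1 - β)) := by
  unfold lyapunovOffset
  split_ifs with hx
  · have hy0 : 0 ≤ x ^ (-β) := rpow_nonneg (by linarith) _
    have hy1 : x ^ (-β) ≤ 1 := rpow_le_one_of_one_le_of_nonpos (hR1.trans hx) (by linarith)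
    have h : (2 * C * c * x ^ (-β)) ^ 2 ≤ 1 := by
      rw [sq_le_one_iff_abs_le_one, abs_le]; constructor <;> nlinarith [mul_nonneg hC hc]
    rw [abs_of_nonneg (by positivity)]
    nlinarith [exp_pos (c * x ^ (1 - β)), exp_pos (c * (R + C) ^ (1 - β))]
  · rw [abs_of_pos (exp_pos _)]
    linarith [exp_pos (c * x ^ (1 - β))]

theorem abs_lyapunovSlope_le (hβ0 : 0 ≤ β) (hβ1 : β ≤ 1) (hR1 : 1 ≤ R) (hc : 0 ≤ c) (x : ℝ) :
    |lyapunovSlope β c R x| ≤ c * exp (c * x ^ (1 - β)) := by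
  unfold lyapunovSlope
  split_ifs with hx
  · have hy0 : 0 ≤ x ^ (-β) := rpow_nonneg (by linarith) _
    have hy1 : x ^ (-β) ≤ 1 := rpow_le_one_of_one_le_of_nonpos (hR1.trans hx) (by linarith)
    have h : (1 - β) * x ^ (-β) ≤ 1 := by nlinarith
    have h1β : 0 ≤ 1 - β := by linarith
    rw [abs_of_nonneg (by positivity)]
    calc c * (1 - β) * x ^ (-β) * exp (c * x ^ (1 - β))
        = c * ((1 - β) * x ^ (-β)) * exp (c * x ^ (1 - β)) := by ring
      _ ≤ c * 1 * exp (c * x ^ (1 - β)) := by gcongr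
      _ = c * exp (c * x ^ (1 - β)) := by ring
  · simp only [abs_zero]; positivity

end Lyapunov

theorem condExp_le_of_ae_le_add_mul {Ω : Type*} {m m0 : MeasurableSpace Ω} {μ : Measure Ω}
    (hm : m ≤ m0) [SigmaFinite (μ.trim hm)] {f g a b δ : Ω → ℝ} (ha : StronglyMeasurable[m] a)
    (hb : StronglyMeasurable[m] b) (hf : Integrable f μ) (hai : Integrable a μ)
    (hbδ : Integrable (b * δ) μ) (hδ : Integrable δ μ) (hfle : f ≤ᵐ[μ] a + b * δ)
    (hle : a + b * μ[δ|m] ≤ᵐ[μ] g) : μ[f|m] ≤ᵐ[μ] g := by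
  filter_upwards [condExp_mono hf (hai.add hbδ) hfle, condExp_add hai hbδ m,
    condExp_mul_of_stronglyMeasurable_left hb hbδ hδ, hle] with ω hmono hadd hpull hω
  rw [hadd, Pi.add_apply, condExp_of_stronglyMeasurable hm ha hai, hpull] at hmono
  exact hmono.trans hω

theorem condExp_exp_mul_rpow_le {Ω : Type*} {m m0 : MeasurableSpace Ω} {μ : Measure Ω}
    [IsFiniteMeasure μ] (hm : m ≤ m0) {X Y : Ω → ℝ} (hX : StronglyMeasurable[m] X)
    (hY : AEStronglyMeasurable Y μ) (hY0 : ∀ ω, 0 ≤ Y ω) {β A C R c : ℝ} (hβ0 : 0 ≤ β)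
    (hβ1 : β ≤ 1) (hR1 : 1 ≤ R) (hC : 0 ≤ C) (hRC : 2 * C ≤ R) (hc : 0 ≤ c)
    (hcC : 2 * C * c ≤ 1) (hcA : c * (2 * C) ^ 2 ≤ (1 - β) * A)
    (hXi : Integrable (fun ω => exp (c * X ω ^ (1 - β))) μ)
    (hYi : Integrable (fun ω => exp (c * Y ω ^ (1 - β))) μ)
    (hjump : ∀ᵐ ω ∂μ, |Y ω - X ω| ≤ C)
    (hdrift : ∀ᵐ ω ∂μ, R ≤ X ω → X ω ^ β * μ[fun ω' => Y ω' - X ω'|m] ω ≤ -A) :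
    μ[fun ω => exp (c * Y ω ^ (1 - β))|m] ≤ᵐ[μ]
      fun ω => exp (c * X ω ^ (1 - β)) + exp (c * (R + C) ^ (1 - β)) := by
  have hoffset : StronglyMeasurable[m] (fun ω => lyapunovOffset β c C R (X ω)) :=
    (measurable_lyapunovOffset.comp hX.measurable).stronglyMeasurable
  have hslope : StronglyMeasurable[m] (fun ω => lyapunovSlope β c R (X ω)) :=
    (measurable_lyapunovSlope.comp hX.measurable).stronglyMeasurable
  have hδ : Integrable (fun ω => Y ω - X ω) μ :=
    .of_bound (hY.sub (hX.mono hm).aestronglyMeasurable) C (by simpa only [norm_eq_abs] using hjump)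
  refine condExp_le_of_ae_le_add_mul hm hoffset hslope hYi ?_ ?_ hδ ?_ ?_
  · refine ((hXi.const_mul 2).add (integrable_const (exp (c * (R + C) ^ (1 - β))))).mono'
      (hoffset.mono hm).aestronglyMeasurable (ae_of_all _ fun ω => ?_)
    simpa only [norm_eq_abs, Pi.add_apply] using abs_lyapunovOffset_le hβ0 hR1 hC hc hcC (X ω)
  · refine (hXi.const_mul (c * C)).mono' ((hslope.mono hm).aestronglyMeasurable.mul hδ.1) ?_
    filter_upwards [hjump] with ω hω
    rw [Pi.mul_apply, norm_mul, norm_eq_abs, norm_eq_abs]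
    calc |lyapunovSlope β c R (X ω)| * |Y ω - X ω| ≤ c * exp (c * X ω ^ (1 - β)) * C :=
          mul_le_mul (abs_lyapunovSlope_le hβ0 hβ1 hR1 hc _) hω (abs_nonneg _) (by positivity)
      _ = c * C * exp (c * X ω ^ (1 - β)) := by ring
  · filter_upwards [hjump] with ω hω
    exact exp_le_lyapunovOffset_add hβ0 hβ1 hR1 hRC hc hcC (hY0 ω) hω
  · filter_upwards [hdrift] with ω hω
    exact lyapunovOffset_add_le hβ1 hR1 hc hcA hω

theorem integrable_exp_mul_rpow_of_ae_le {Ω : Type*} {m0 : MeasurableSpace Ω} {μ : Measure Ω}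
    [IsFiniteMeasure μ] {X : Ω → ℝ} {c γ M : ℝ} (hX : AEMeasurable X μ) (hX0 : ∀ ω, 0 ≤ X ω)
    (hc : 0 ≤ c) (hγ : 0 ≤ γ) (hXM : ∀ᵐ ω ∂μ, X ω ≤ M) :
    Integrable (fun ω => exp (c * X ω ^ γ)) μ := by
  refine .of_bound (by fun_prop) (exp (c * M ^ γ)) ?_
  filter_upwards [hXM] with ω hω
  rw [norm_of_nonneg (exp_pos _).le]
  gcongr
  exact hX0 ω

theorem ae_le_add_mul_of_abs_sub_le {Ω : Type*} {m0 : MeasurableSpace Ω} {μ : Measure Ω}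
    {Z : ℕ → Ω → ℝ} {C M : ℝ} (hjumps : ∀ n, ∀ᵐ ω ∂μ, |Z (n + 1) ω - Z n ω| ≤ C)
    (hM : ∀ᵐ ω ∂μ, Z 0 ω ≤ M) (n : ℕ) : ∀ᵐ ω ∂μ, Z n ω ≤ M + C * n := by
  induction n with
  | zero => simpa using hM
  | succ n ih =>
    filter_upwards [ih, hjumps n] with ω hn hjump
    push_cast
    linarith [(abs_le.1 hjump).2]

theorem eventually_le_sq_of_le_add_const {u : ℕ → ℝ} {K : ℝ} {N : ℕ}
    (h : ∀ n ≥ N, u (n + 1) ≤ u n + K) : ∀ᶠ n in atTop, u n ≤ (n : ℝ) ^ 2 := by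
  have hlin : ∀ n ≥ N, u n ≤ |u N| + |K| * n := by
    intro n hn
    induction n, hn using Nat.le_induction with
    | base => nlinarith [le_abs_self (u N), abs_nonneg K, (N.cast_nonneg : (0 : ℝ) ≤ N)]
    | succ n hn ih =>
      have := h n hn
      push_cast
      linarith [le_abs_self K]
  filter_upwards [eventually_ge_atTop N, eventually_ge_atTop 1,
    tendsto_natCast_atTop_atTop.eventually_ge_atTop (|u N| + |K|)] with n hN h1 hn
  have h1' : (1 : ℝ) ≤ n := by exact_mod_cast h1
  nlinarith [hlin n hN, abs_nonneg (u N), abs_nonneg K]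

theorem eventually_pow_le_exp_mul_log_rpow {c δ : ℝ} (hc : 0 < c) (hδ : 0 < δ) (k : ℕ) :
    ∀ᶠ n : ℕ in atTop, (n : ℝ) ^ k ≤ exp (c * log n ^ (1 + δ)) := by
  have hlog : Tendsto (fun n : ℕ => log n) atTop atTop :=
    tendsto_log_atTop.comp tendsto_natCast_atTop_atTop
  have hpow := ((tendsto_rpow_atTop hδ).comp hlog).const_mul_atTop hc
  filter_upwards [hpow.eventually_ge_atTop (k : ℝ), eventually_ge_atTop 1] with n hn h1
  simp only [Function.comp_apply] at hn
  have hL : 0 ≤ log n := log_natCast_nonneg n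
  calc (n : ℝ) ^ k = exp (k * log n) := by
        rw [← log_pow, exp_log (by positivity)]
    _ ≤ exp (c * log n ^ (1 + δ)) := by
        rw [exp_le_exp, rpow_one_add' hL (by linarith)]
        nlinarith [mul_le_mul_of_nonneg_right hn hL]

theorem ae_eventually_notMem_of_summable {Ω : Type*} {m0 : MeasurableSpace Ω} {μ : Measure Ω}
    [IsFiniteMeasure μ] {s : ℕ → Set Ω} {u : ℕ → ℝ} (hu : Summable u)
    (hs : ∀ᶠ n in atTop, μ.real (s n) ≤ u n) : ∀ᵐ ω ∂μ, ∀ᶠ n in atTop, ω ∉ s n := by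
  have hsum : Summable fun n => μ.real (s n) :=
    hu.of_norm_bounded_eventually_nat <| hs.mono fun n hn => by
      rwa [norm_of_nonneg measureReal_nonneg]
  refine ae_eventually_notMem ?_
  simp_rw [← ofReal_measureReal (measure_ne_top μ _)]
  rw [← ENNReal.ofReal_tsum_of_nonneg (fun _ => measureReal_nonneg) hsum]
  exact ENNReal.ofReal_ne_top

theorem ae_eventually_le_log_rpow_of_integral_exp_le {Ω : Type*} {m0 : MeasurableSpace Ω}
    {μ : Measure Ω} [IsFiniteMeasure μ] {Z : ℕ → Ω → ℝ} {γ c ε : ℝ} (k : ℕ) (hγ : 0 < γ)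
    (hc : 0 < c) (hε : 0 < ε)
    (hint : ∀ n, Integrable (fun ω => exp (c * Z n ω ^ γ)) μ)
    (hgrowth : ∀ᶠ n : ℕ in atTop, ∫ ω, exp (c * Z n ω ^ γ) ∂μ ≤ (n : ℝ) ^ k) :
    ∀ᵐ ω ∂μ, ∀ᶠ n in atTop, Z n ω ≤ log n ^ (1 / γ + ε) := by
  have hq : (1 / γ + ε) * γ = 1 + ε * γ := by field_simp
  have htail : ∀ᶠ n : ℕ in atTop,
      μ.real {ω | log n ^ (1 / γ + ε) < Z n ω} ≤ 1 / (n : ℝ) ^ 2 := by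
    filter_upwards [hgrowth, eventually_pow_le_exp_mul_log_rpow hc (mul_pos hε hγ) (k + 2),
      eventually_ge_atTop 1] with n hI hT hn
    set T := exp (c * log n ^ (1 + ε * γ))
    have hsub : {ω | log n ^ (1 / γ + ε) < Z n ω} ⊆ {ω | T ≤ exp (c * Z n ω ^ γ)} := by
      intro ω hω
      have hL : 0 ≤ log n := log_natCast_nonneg n
      simp only [Set.mem_ofPred_eq, T, ← hq, rpow_mul hL] at hω ⊢
      gcongr
    have hmarkov : μ.real {ω | log n ^ (1 / γ + ε) < Z n ω} * n ^ (k + 2) ≤ n ^ k :=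
      calc _ ≤ T * μ.real {ω | T ≤ exp (c * Z n ω ^ γ)} := by
            rw [mul_comm]; gcongr; exact measure_ne_top μ _
        _ ≤ ∫ ω, exp (c * Z n ω ^ γ) ∂μ :=
            mul_meas_ge_le_integral_of_nonneg (ae_of_all _ fun _ => (exp_pos _).le) (hint n) T
        _ ≤ n ^ k := hI
    have hn0 : (0 : ℝ) < n := by exact_mod_cast hn
    rw [le_div_iff₀ (by positivity), ← mul_le_mul_iff_of_pos_right (pow_pos hn0 k), one_mul]
    calc _ = μ.real {ω | log n ^ (1 / γ + ε) < Z n ω} * n ^ (k + 2) := by ring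
      _ ≤ _ := hmarkov
  filter_upwards [ae_eventually_notMem_of_summable (summable_one_div_nat_pow.2 one_lt_two) htail]
    with ω hω
  exact hω.mono fun n hn => not_lt.1 hn

theorem ae_eventually_le_log_rpow_of_ae_le_initial {Ω : Type*} {m0 : MeasurableSpace Ω}
    {μ : Measure Ω} [IsFiniteMeasure μ] (ℱ : Filtration ℕ m0) {Z : ℕ → Ω → ℝ}
    (hadapt : ∀ n, StronglyMeasurable[ℱ n] (Z n)) (hpos : ∀ n ω, 0 ≤ Z n ω) {C : ℝ}
    (hjumps : ∀ n, ∀ᵐ ω ∂μ, |Z (n + 1) ω - Z n ω| ≤ C) {β A R : ℝ} {N : ℕ} (hβ0 : 0 ≤ β)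
    (hβ1 : β < 1) (hA : 0 < A)
    (hdrift : ∀ n, N ≤ n → ∀ᵐ ω ∂μ, R ≤ Z n ω →
      Z n ω ^ β * μ[fun ω' => Z (n + 1) ω' - Z n ω'|ℱ n] ω ≤ -A)
    {M : ℝ} (hM : ∀ᵐ ω ∂μ, Z 0 ω ≤ M) {ε : ℝ} (hε : 0 < ε) :
    ∀ᵐ ω ∂μ, ∀ᶠ n in atTop, Z n ω ≤ log n ^ (1 / (1 - β) + ε) := by
  set C' := max C 1
  set R' := max R 0 + 2 * C'
  set c := min ((1 - β) * A / (2 * C') ^ 2) (1 / (2 * C'))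
  have hC' : 0 < C' := lt_max_of_lt_right one_pos
  have hβ : 0 < 1 - β := by linarith
  have hc : 0 < c := lt_min (by positivity) (by positivity)
  have hcC : 2 * C' * c ≤ 1 := by
    have := min_le_right ((1 - β) * A / (2 * C') ^ 2) (1 / (2 * C'))
    rwa [le_div_iff₀ (by positivity), mul_comm] at this
  have hcA : c * (2 * C') ^ 2 ≤ (1 - β) * A :=
    (le_div_iff₀ (by positivity)).1 (min_le_left _ _)
  have hR'1 : 1 ≤ R' := by linarith [le_max_right R 0, le_max_right C 1]
  have hR'C : 2 * C' ≤ R' := by linarith [le_max_right R 0]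
  have hjumps' : ∀ n, ∀ᵐ ω ∂μ, |Z (n + 1) ω - Z n ω| ≤ C' :=
    fun n => (hjumps n).mono fun _ h => h.trans (le_max_left _ _)
  have hmeas : ∀ n, StronglyMeasurable (Z n) := fun n => (hadapt n).mono (ℱ.le n)
  have hint : ∀ n, Integrable (fun ω => exp (c * Z n ω ^ (1 - β))) μ := fun n =>
    integrable_exp_mul_rpow_of_ae_le (hmeas n).measurable.aemeasurable (hpos n) hc.le hβ.le
      (ae_le_add_mul_of_abs_sub_le hjumps' hM n)
  have hstep : ∀ n ≥ N, ∫ ω, exp (c * Z (n + 1) ω ^ (1 - β)) ∂μ ≤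
      ∫ ω, exp (c * Z n ω ^ (1 - β)) ∂μ + μ.real Set.univ * exp (c * (R' + C') ^ (1 - β)) := by
    intro n hn
    have hcond := condExp_exp_mul_rpow_le (ℱ.le n) (hadapt n) (hmeas (n + 1)).aestronglyMeasurable
      (hpos (n + 1)) hβ0 hβ1.le hR'1 hC'.le hR'C hc.le hcC hcA (hint n)
      (hint (n + 1)) (hjumps' n)
      ((hdrift n hn).mono fun ω h (hR : R' ≤ Z n ω) => h (by linarith [le_max_left R 0]))
    calc _ = ∫ ω, μ[fun ω => exp (c * Z (n + 1) ω ^ (1 - β))|ℱ n] ω ∂μ :=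
          (integral_condExp (ℱ.le n)).symm
      _ ≤ ∫ ω, (exp (c * Z n ω ^ (1 - β)) + exp (c * (R' + C') ^ (1 - β))) ∂μ :=
          integral_mono_ae integrable_condExp ((hint n).add (integrable_const _)) hcond
      _ = _ := by rw [integral_add (hint n) (integrable_const _), integral_const, smul_eq_mul]
  exact ae_eventually_le_log_rpow_of_integral_exp_le 2 hβ hc hε hint
    (eventually_le_sq_of_le_add_const hstep)

theorem polylog_upper_bound_general
    {Ω : Type*} {m0 : MeasurableSpace Ω} {μ : Measure Ω} [IsProbabilityMeasure μ]
    (ℱ : MeasureTheory.Filtration ℕ m0)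
    (Z : ℕ → Ω → ℝ)
    (hadapt : ∀ n, StronglyMeasurable[ℱ n] (Z n))
    (hpos : ∀ n ω, 0 ≤ Z n ω)
    (hjumps : ∃ C : ℝ, ∀ n, ∀ᵐ ω ∂μ, |Z (n + 1) ω - Z n ω| ≤ C)
    (β A R : ℝ) (N : ℕ) (hβ0 : 0 ≤ β) (hβ1 : β < 1) (hA : 0 < A)
    (hdrift : ∀ n, N ≤ n → ∀ᵐ ω ∂μ, R ≤ Z n ω →
      Z n ω ^ β * (μ[(fun ω' => Z (n + 1) ω' - Z n ω') | ℱ n]) ω ≤ -A) :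
    ∀ ε : ℝ, 0 < ε → ∀ᵐ ω ∂μ, ∀ᶠ n in Filter.atTop,
      Z n ω ≤ Real.log n ^ (1 / (1 - β) + ε) := by
  intro ε hε
  obtain ⟨C, hC⟩ := hjumps
  have hlocal : ∀ M : ℕ, ∀ᵐ ω ∂μ, Z 0 ω ≤ M →
      ∀ᶠ n in atTop, Z n ω ≤ log n ^ (1 / (1 - β) + ε) := by
    intro M
    have hG : MeasurableSet[ℱ 0] {ω | Z 0 ω ≤ M} :=
      measurableSet_le (hadapt 0).measurable measurable_const
    refine (ae_restrict_iff' (ℱ.le 0 _ hG)).1 <|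
      ae_eventually_le_log_rpow_of_ae_le_initial (R := R) (N := N) ℱ hadapt hpos
        (fun n => ae_restrict_of_ae (hC n)) hβ0 hβ1 hA (fun n hn => ?_)
        ((ae_restrict_iff' (ℱ.le 0 _ hG)).2 (ae_of_all _ fun _ h => h)) hε
    have hδ : Integrable (fun ω => Z (n + 1) ω - Z n ω) μ :=
      .of_bound (((hadapt _).mono (ℱ.le _)).sub ((hadapt n).mono (ℱ.le n))).aestronglyMeasurable C
        (by simpa only [norm_eq_abs] using hC n)
    filter_upwards [ae_restrict_of_ae (hdrift n hn),
      condExp_restrict_ae_eq_restrict (ℱ.le n) (ℱ.mono (Nat.zero_le n) _ hG) hδ] with ω hω hcond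
    rwa [hcond]
  filter_upwards [ae_all_iff.2 hlocal] with ω hω
  exact hω ⌈Z 0 ω⌉₊ (Nat.le_ceil _)

/-- If Z has bounded jumps and Z_n^β E_n[Z_{n+1} − Z_n] ≤ −A on {Z_n ≥ R} for large n,
then a.s. Z_n ≤ (log n)^{1/(1−β)+ε} eventually. -/
theorem polylog_upper_bound
    {Ω : Type*} {m0 : MeasurableSpace Ω} {μ : Measure Ω} [IsProbabilityMeasure μ]
    (ℱ : MeasureTheory.Filtration ℕ m0)
    (Z : ℕ → Ω → ℝ)
    (hadapt : ∀ n, StronglyMeasurable[ℱ n] (Z n))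
    (hpos : ∀ n ω, 0 ≤ Z n ω)
    (hjumps : ∃ C : ℝ, ∀ n, ∀ᵐ ω ∂μ, |Z (n + 1) ω - Z n ω| ≤ C)
    (β A R : ℝ) (N : ℕ) (hβ0 : 0 ≤ β) (hβ1 : β < 1) (hA : 0 < A) (hR : 1 ≤ R)
    (hdrift : ∀ n, N ≤ n → ∀ᵐ ω ∂μ, R ≤ Z n ω →
      Z n ω ^ β * (μ[(fun ω' => Z (n + 1) ω' - Z n ω') | ℱ n]) ω ≤ -A) :
    ∀ ε : ℝ, 0 < ε → ∀ᵐ ω ∂μ, ∀ᶠ n in Filter.atTop,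
      Z n ω ≤ Real.log n ^ (1 / (1 - β) + ε) :=
  polylog_upper_bound_general ℱ Z hadapt hpos hjumps β A R N hβ0 hβ1 hA hdrift
end
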